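/- arXiv:math-ph/0512071 — 12 statements merged into one kernel-verified Lean document; each statement's English description precedes it below -/
import Mathlib

section
/- For every Itô *-algebra (𝔞, ⋆, d_t, l) there exist a complex inner product space K, a ℂ-linear map k : 𝔞 → K whose image spans K, and a ℂ-linear map i from 𝔞 into the ℂ-linear endomorphisms of K such that for all a, b, c ∈ 𝔞: ⟪k(a), k(b)⟫ = l(a⋆·b); i(a·b) = i(a) ∘ i(b); i(a)(k(b)) = k(a·b); and ⟪k(a), i(b)(k(c))⟫ = l(a⋆·b·c). In particular k(d_t) = 0 and i(d_t) = 0. -/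
/-!
GNS construction. The form `(a, b) ↦ l (a⋆ · b)` is hermitian and positive semidefinite, so by
Cauchy–Schwarz its kernel consists of the vectors of length zero, and it descends to an inner
product on the quotient of `𝔞` by that kernel. The kernel is a left ideal, so left multiplication
descends to a representation on the quotient. Finally `k d_t = 0` because `l (d_t⋆ · d_t) = 0`,
and `i d_t` kills every `k b` because `d_t · b = 0`.
-/

open scoped ComplexOrder

namespace LinearMap.IsPosSemidef

variable {𝕜 E : Type*} [RCLike 𝕜] [AddCommGroup E] [Module 𝕜 E] {B : E →ₗ⋆[𝕜] E →ₗ[𝕜] 𝕜}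

abbrev toPreInnerProductSpaceCore (hB : B.IsPosSemidef) : PreInnerProductSpace.Core 𝕜 E where
  inner x y := B x y
  conj_inner_symm x y := hB.isSymm.eq y x
  re_inner_nonneg x := (RCLike.nonneg_iff.mp (hB.isNonneg.nonneg x)).1
  add_left := by simp
  smul_left := by simp

theorem mem_ker_of_apply_self_eq_zero (hB : B.IsPosSemidef) {x : E} (hx : B x x = 0) :
    x ∈ B.ker := by
  let _ := hB.toPreInnerProductSpaceCore
  refine LinearMap.ext fun y ↦ norm_eq_zero.mp (le_antisymm ?_ (norm_nonneg _))
  calc ‖B x y‖ ≤ √(RCLike.re (B x x)) * √(RCLike.re (B y y)) :=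
        InnerProductSpace.Core.norm_inner_le_norm (𝕜 := 𝕜) x y
    _ = 0 := by simp [hx]

abbrev quotientKerCore (hB : B.IsPosSemidef) : InnerProductSpace.Core 𝕜 (E ⧸ B.ker) where
  inner x y := hB.isSymm.isRefl.liftQ₂ B B.ker le_rfl x y
  conj_inner_symm := by
    rintro ⟨x⟩ ⟨y⟩
    exact hB.isSymm.eq y x
  re_inner_nonneg := by
    rintro ⟨x⟩
    exact (RCLike.nonneg_iff.mp (hB.isNonneg.nonneg x)).1
  add_left := by simp
  smul_left := by simp
  definite := by
    rintro ⟨x⟩ hx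
    exact (Submodule.Quotient.mk_eq_zero _).mpr (hB.mem_ker_of_apply_self_eq_zero hx)

end LinearMap.IsPosSemidef

namespace ItoStarAlgebra

variable {A : Type*} [AddCommGroup A] [Module ℂ A]
  (m : A →ₗ[ℂ] A →ₗ[ℂ] A) (st : A →ₗ⋆[ℂ] A) (l : A →ₗ[ℂ] ℂ)

def gnsForm : A →ₗ⋆[ℂ] A →ₗ[ℂ] ℂ := m.compr₂ l ∘ₛₗ st

@[simp]
theorem gnsForm_apply (a b : A) : gnsForm m st l a b = l (m (st a) b) := rfl

theorem isPosSemidef_gnsForm (hstm : ∀ a b : A, st (m a b) = m (st b) (st a))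
    (hstst : ∀ a : A, st (st a) = a) (hlst : ∀ a : A, l (st a) = starRingEnd ℂ (l a))
    (hlpos : ∀ a : A, 0 ≤ l (m (st a) a)) : (gnsForm m st l).IsPosSemidef where
  eq a b := by simp only [gnsForm_apply, ← hlst, hstm, hstst]
  nonneg := hlpos

theorem ker_gnsForm_le_comap (hassoc : ∀ a b c : A, m (m a b) c = m a (m b c))
    (hstm : ∀ a b : A, st (m a b) = m (st b) (st a)) (a : A) :
    (gnsForm m st l).ker ≤ (gnsForm m st l).ker.comap (m a) := by
  intro b hb
  ext c
  simpa [hstm, hassoc] using LinearMap.congr_fun hb (m (st a) c)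

def gnsRep (hassoc : ∀ a b c : A, m (m a b) c = m a (m b c))
    (hstm : ∀ a b : A, st (m a b) = m (st b) (st a)) :
    A →ₗ[ℂ] Module.End ℂ (A ⧸ (gnsForm m st l).ker) :=
  Submodule.mapQLinear _ _ ∘ₗ m.codRestrict _ (ker_gnsForm_le_comap m st l hassoc hstm)

variable {m st l} in
theorem gnsRep_mkQ (hassoc : ∀ a b c : A, m (m a b) c = m a (m b c))
    (hstm : ∀ a b : A, st (m a b) = m (st b) (st a)) (a b : A) :
    gnsRep m st l hassoc hstm a ((gnsForm m st l).ker.mkQ b) = (gnsForm m st l).ker.mkQ (m a b) :=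
  rfl

variable {m st l} in
theorem gnsRep_mul (hassoc : ∀ a b c : A, m (m a b) c = m a (m b c))
    (hstm : ∀ a b : A, st (m a b) = m (st b) (st a)) (a b : A) :
    gnsRep m st l hassoc hstm (m a b) =
      gnsRep m st l hassoc hstm a ∘ₗ gnsRep m st l hassoc hstm b :=
  Submodule.linearMap_qext _ <| LinearMap.ext fun c ↦ by
    simp only [LinearMap.comp_apply, gnsRep_mkQ, hassoc]

end ItoStarAlgebra

open ComplexOrder in
theorem ito_canonical_representation_general
    {A : Type} [AddCommGroup A] [Module ℂ A]
    (m : A →ₗ[ℂ] A →ₗ[ℂ] A) (st : A →ₗ⋆[ℂ] A) (dt : A) (l : A →ₗ[ℂ] ℂ)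
    (hassoc : ∀ a b c : A, m (m a b) c = m a (m b c))
    (hstm : ∀ a b : A, st (m a b) = m (st b) (st a))
    (hstst : ∀ a : A, st (st a) = a)
    (hmdt : ∀ a : A, m a dt = 0)
    (hdtm : ∀ a : A, m dt a = 0)
    (hlst : ∀ a : A, l (st a) = starRingEnd ℂ (l a))
    (hlpos : ∀ a : A, 0 ≤ l (m (st a) a)) :
    ∃ (K : Type) (_ : NormedAddCommGroup K) (_ : InnerProductSpace ℂ K)
      (k : A →ₗ[ℂ] K) (i : A →ₗ[ℂ] (K →ₗ[ℂ] K)),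
      Submodule.span ℂ (Set.range k) = ⊤ ∧
      (∀ a b : A, (inner ℂ (k a) (k b) : ℂ) = l (m (st a) b)) ∧
      (∀ a b : A, i (m a b) = (i a) ∘ₗ (i b)) ∧
      (∀ a b : A, i a (k b) = k (m a b)) ∧
      (∀ a b c : A, (inner ℂ (k a) (i b (k c)) : ℂ) = l (m (st a) (m b c))) ∧
      k dt = 0 ∧ i dt = 0 := by
  open ItoStarAlgebra in
  let c := (isPosSemidef_gnsForm m st l hstm hstst hlst hlpos).quotientKerCore
  let _ := c.toNormedAddCommGroup
  let _ := InnerProductSpace.ofCore c.toCore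
  let k := (gnsForm m st l).ker.mkQ
  have hinner (a b : A) : inner ℂ (k a) (k b) = gnsForm m st l a b := rfl
  have hik := gnsRep_mkQ (l := l) hassoc hstm
  refine ⟨_, _, _, k, gnsRep m st l hassoc hstm, ?_, hinner, gnsRep_mul hassoc hstm, hik,
    fun a b c ↦ ?_, ?_, ?_⟩
  · rw [← LinearMap.coe_range, Submodule.span_eq, Submodule.range_mkQ]
  · rw [hik, hinner, gnsForm_apply]
  · rw [← inner_self_eq_zero (𝕜 := ℂ), hinner, gnsForm_apply, hmdt, map_zero]
  · exact Submodule.linearMap_qext _ <| LinearMap.ext fun b ↦ by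
      simp only [LinearMap.comp_apply, hik, hdtm, map_zero, LinearMap.zero_apply]

open ComplexOrder in
/-- Every Itô *-algebra `(A, ⋆, dt, l)` admits a canonical (GNS-type)
representation: a complex inner product space `K`, a linear map `k : A → K` with spanning
image, and a linear multiplicative map `i : A → End(K)` such that
`⟪k a, k b⟫ = l (a⋆·b)`, `i (a·b) = i a ∘ i b`, `i a (k b) = k (a·b)` and
`⟪k a, i b (k c)⟫ = l (a⋆·b·c)`; in particular `k dt = 0` and `i dt = 0`. -/
theorem ito_canonical_representation
    {A : Type} [AddCommGroup A] [Module ℂ A]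
    (m : A →ₗ[ℂ] A →ₗ[ℂ] A) (st : A →ₗ⋆[ℂ] A) (dt : A) (l : A →ₗ[ℂ] ℂ)
    (hassoc : ∀ a b c : A, m (m a b) c = m a (m b c))
    (hstm : ∀ a b : A, st (m a b) = m (st b) (st a))
    (hstst : ∀ a : A, st (st a) = a)
    (hstdt : st dt = dt)
    (hmdt : ∀ a : A, m a dt = 0)
    (hdtm : ∀ a : A, m dt a = 0)
    (hldt : l dt = 1)
    (hlst : ∀ a : A, l (st a) = starRingEnd ℂ (l a))
    (hlpos : ∀ a : A, 0 ≤ l (m (st a) a)) :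
    ∃ (K : Type) (_ : NormedAddCommGroup K) (_ : InnerProductSpace ℂ K)
      (k : A →ₗ[ℂ] K) (i : A →ₗ[ℂ] (K →ₗ[ℂ] K)),
      Submodule.span ℂ (Set.range k) = ⊤ ∧
      (∀ a b : A, (inner ℂ (k a) (k b) : ℂ) = l (m (st a) b)) ∧
      (∀ a b : A, i (m a b) = (i a) ∘ₗ (i b)) ∧
      (∀ a b : A, i a (k b) = k (m a b)) ∧
      (∀ a b c : A, (inner ℂ (k a) (i b (k c)) : ℂ) = l (m (st a) (m b c))) ∧
      k dt = 0 ∧ i dt = 0 :=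
  ito_canonical_representation_general m st dt l hassoc hstm hstst hmdt hdtm hlst hlpos
end

section
/- For every Itô *-algebra (𝔞, ⋆, d_t, l) there exist a complex inner product space K and a ℂ-linear map 𝐢 from 𝔞 into the ℂ-linear endomorphisms of M := ℂ × K × ℂ such that, with the Hermitian sesquilinear form ⟨(α,x,β)|(α',x',β')⟩_J := conj(α)·β' + ⟪x,x'⟫ + conj(β)·α' on M, the following hold for all a, b ∈ 𝔞 and u, v ∈ M: (i) 𝐢(a·b) = 𝐢(a) ∘ 𝐢(b); (ii) ⟨𝐢(a⋆)u | v⟩_J = ⟨u | 𝐢(a)v⟩_J; (iii) ⟨k₊ | 𝐢(a) k₊⟩_J = l(a), where k₊ := (0, 0, 1); (iv) 𝐢(d_t)(α, x, β) = (β, 0, 0) for all (α,x,β) ∈ M. (This realizes every Itô *-algebra by pseudo-Hermitian triangular operators on a complex Minkowski space ℂ ⊕ K ⊕ ℂ, with vacuum expectation l.) -/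
/-!
The GNS construction for the positive functional `l` gives a pre-Hilbert space `K` of classes
`[a]` with `⟪[a], [b]⟫ = l (a⋆ b)`, on which left multiplication `π a` descends (by Cauchy–Schwarz
it preserves null vectors), together with the cocycle `η a = [a]`. The identities
`l (a b) = ⟪η a⋆, η b⟫`, `η (a b) = π a (η b)` and `π (a b) = π a ∘ π b` are exactly what makes
`a ↦ [[0, ⟪η a⋆, ·⟫, l a], [0, π a, η a], [0, 0, 0]]` multiplicative, and `π a⋆ = (π a)†`,
`l a⋆ = conj (l a)` make it pseudo-Hermitian for the Minkowski metric. Since `dt` annihilates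
everything, it is a null vector acting by zero, leaving only the corner entry `l dt = 1`.
-/

noncomputable section

open scoped InnerProductSpace ComplexConjugate

section Triangular

variable {R K : Type*} [CommSemiring R] [AddCommMonoid K] [Module R K]

/-- The operator with block matrix `[[0, φ, λ], [0, T, η], [0, 0, 0]]` on `R × K × R`. -/
@[simps]
def triangularOp (lam : R) (φ : K →ₗ[R] R) (T : K →ₗ[R] K) (η : K) :
    (R × K × R) →ₗ[R] (R × K × R) where
  toFun u := (lam * u.2.2 + φ u.2.1, T u.2.1 + u.2.2 • η, 0)
  map_add' u v := by
    simp only [Prod.fst_add, Prod.snd_add, map_add, mul_add, add_smul, Prod.mk_add_mk, add_zero,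
      Prod.mk.injEq, and_true]
    constructor <;> abel
  map_smul' c u := by
    ext <;> simp [mul_left_comm, mul_add, smul_smul]

theorem triangularOp_comp (lam lam' : R) (φ φ' : K →ₗ[R] R) (T T' : K →ₗ[R] K) (η η' : K) :
    triangularOp lam φ T η ∘ₗ triangularOp lam' φ' T' η' =
      triangularOp (φ η') (φ ∘ₗ T') (T ∘ₗ T') (T η') := by
  ext <;> simp

theorem triangularOp_add (lam lam' : R) (φ φ' : K →ₗ[R] R) (T T' : K →ₗ[R] K) (η η' : K) :
    triangularOp (lam + lam') (φ + φ') (T + T') (η + η') =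
      triangularOp lam φ T η + triangularOp lam' φ' T' η' := by
  ext <;> simp

theorem triangularOp_smul (c lam : R) (φ : K →ₗ[R] R) (T : K →ₗ[R] K) (η : K) :
    triangularOp (c * lam) (c • φ) (c • T) (c • η) = c • triangularOp lam φ T η := by
  ext <;> simp

end Triangular

section Minkowski

variable {K : Type*} [SeminormedAddCommGroup K] [InnerProductSpace ℂ K]

def minkowskiForm (u v : ℂ × K × ℂ) : ℂ :=
  conj u.1 * v.2.2 + ⟪u.2.1, v.2.1⟫_ℂ + conj u.2.2 * v.1

theorem minkowskiForm_triangularOp {S T : K →ₗ[ℂ] K} (hST : ∀ x y, ⟪S x, y⟫_ℂ = ⟪x, T y⟫_ℂ)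
    (lam : ℂ) (η ζ : K) (u v : ℂ × K × ℂ) :
    minkowskiForm (triangularOp (conj lam) (innerₛₗ ℂ ζ) S η u) v =
      minkowskiForm u (triangularOp lam (innerₛₗ ℂ η) T ζ v) := by
  simp only [minkowskiForm, triangularOp_apply, innerₛₗ_apply_apply, map_add, map_mul,
    inner_conj_symm, inner_add_left, inner_add_right, inner_smul_left, inner_smul_right, hST,
    Complex.conj_conj, map_zero, zero_mul, mul_zero, add_zero, zero_add]
  ring

theorem minkowskiForm_vacuum_triangularOp (lam : ℂ) (φ : K →ₗ[ℂ] ℂ) (T : K →ₗ[ℂ] K) (η : K) :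
    minkowskiForm (0, 0, 1) (triangularOp lam φ T η (0, 0, 1)) = lam := by
  simp [minkowskiForm]

end Minkowski

section MinkowskiRep

variable {A K : Type*} [AddCommGroup A] [Module ℂ A] [SeminormedAddCommGroup K]
  [InnerProductSpace ℂ K] (l : A →ₗ[ℂ] ℂ) (st : A →ₗ⋆[ℂ] A) (π : A →ₗ[ℂ] K →ₗ[ℂ] K) (η : A →ₗ[ℂ] K)

def minkowskiRep : A →ₗ[ℂ] (ℂ × K × ℂ) →ₗ[ℂ] (ℂ × K × ℂ) where
  toFun a := triangularOp (l a) (innerₛₗ ℂ (η (st a))) (π a) (η a)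
  map_add' a b := by simp only [map_add, triangularOp_add]
  map_smul' c a := by
    simp only [map_smul, map_smulₛₗ, smul_eq_mul, RingHom.id_apply, Complex.conj_conj,
      triangularOp_smul]

theorem minkowskiRep_apply (a : A) :
    minkowskiRep l st π η a = triangularOp (l a) (innerₛₗ ℂ (η (st a))) (π a) (η a) := rfl

variable {l st π η}

theorem minkowskiRep_mul {m : A →ₗ[ℂ] A →ₗ[ℂ] A} (hstm : ∀ a b, st (m a b) = m (st b) (st a))
    (hstst : ∀ a, st (st a) = a) (hπ : ∀ a b, π (m a b) = π a ∘ₗ π b)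
    (hη : ∀ a b, η (m a b) = π a (η b)) (hinner : ∀ a b, ⟪η a, η b⟫_ℂ = l (m (st a) b))
    (hadj : ∀ a x y, ⟪π (st a) x, y⟫_ℂ = ⟪x, π a y⟫_ℂ) (a b : A) :
    minkowskiRep l st π η (m a b) = minkowskiRep l st π η a ∘ₗ minkowskiRep l st π η b := by
  have hl : l (m a b) = innerₛₗ ℂ (η (st a)) (η b) := by
    rw [innerₛₗ_apply_apply, hinner, hstst]
  have hφ : innerₛₗ ℂ (η (st (m a b))) = innerₛₗ ℂ (η (st a)) ∘ₗ π b := by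
    ext x
    simp [hstm, hη, hadj]
  rw [minkowskiRep_apply, minkowskiRep_apply, minkowskiRep_apply, triangularOp_comp, hl, hφ,
    hπ, hη]

theorem minkowskiForm_minkowskiRep_star (hstst : ∀ a, st (st a) = a)
    (hlst : ∀ a, l (st a) = conj (l a)) (hadj : ∀ a x y, ⟪π (st a) x, y⟫_ℂ = ⟪x, π a y⟫_ℂ)
    (a : A) (u v : ℂ × K × ℂ) :
    minkowskiForm (minkowskiRep l st π η (st a) u) v =
      minkowskiForm u (minkowskiRep l st π η a v) := by
  rw [minkowskiRep_apply, minkowskiRep_apply, hlst, hstst]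
  exact minkowskiForm_triangularOp (hadj a) _ _ _ u v

theorem minkowskiForm_vacuum_minkowskiRep (a : A) :
    minkowskiForm (0, 0, 1) (minkowskiRep l st π η a (0, 0, 1)) = l a :=
  minkowskiForm_vacuum_triangularOp _ _ _ _

theorem minkowskiRep_apply_of_null {dt : A} (hl : l dt = 1) (hst : st dt = dt) (hπ : π dt = 0)
    (hη : η dt = 0) (u : ℂ × K × ℂ) : minkowskiRep l st π η dt u = (u.2.2, 0, 0) := by
  simp [minkowskiRep_apply, hl, hst, hπ, hη]

end MinkowskiRep

section AdjointDescends

variable {𝕜 E : Type*} [RCLike 𝕜] [SeminormedAddCommGroup E] [InnerProductSpace 𝕜 E]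

/-- By Cauchy–Schwarz, `‖T x‖² = re ⟪S (T x), x⟫ ≤ ‖S (T x)‖ ‖x‖`, so `T` preserves null vectors. -/
theorem Inseparable.map_of_adjoint {T S : E →ₗ[𝕜] E} (hST : ∀ x y, ⟪S x, y⟫_𝕜 = ⟪x, T y⟫_𝕜)
    {x y : E} (hxy : Inseparable x y) : Inseparable (T x) (T y) := by
  rw [Metric.inseparable_iff, dist_eq_norm] at hxy ⊢
  rw [← map_sub]
  set z := x - y
  have hsq : ‖T z‖ ^ 2 ≤ 0 :=
    calc ‖T z‖ ^ 2 = RCLike.re ⟪S (T z), z⟫_𝕜 := by rw [hST, ← norm_sq_eq_re_inner]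
      _ ≤ ‖S (T z)‖ * ‖z‖ := re_inner_le_norm _ _
      _ = 0 := by rw [hxy, mul_zero]
  exact pow_eq_zero_iff two_ne_zero |>.mp (le_antisymm hsq (sq_nonneg _))

namespace SeparationQuotient

def mapOfAdjoint (T S : E →ₗ[𝕜] E) (hST : ∀ x y, ⟪S x, y⟫_𝕜 = ⟪x, T y⟫_𝕜) :
    SeparationQuotient E →ₗ[𝕜] SeparationQuotient E where
  toFun := lift (fun x => mk (T x)) fun _ _ h => mk_eq_mk.2 (h.map_of_adjoint hST)
  map_add' := Quotient.ind₂ fun x y => congrArg mk (map_add T x y)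
  map_smul' c := Quotient.ind fun x => congrArg mk (map_smul T c x)

@[simp]
theorem mapOfAdjoint_mk (T S : E →ₗ[𝕜] E) (hST : ∀ x y, ⟪S x, y⟫_𝕜 = ⟪x, T y⟫_𝕜) (x : E) :
    mapOfAdjoint T S hST (mk x) = mk (T x) := rfl

theorem inner_mapOfAdjoint_left {T S : E →ₗ[𝕜] E} (hST : ∀ x y, ⟪S x, y⟫_𝕜 = ⟪x, T y⟫_𝕜)
    (hTS : ∀ x y, ⟪T x, y⟫_𝕜 = ⟪x, S y⟫_𝕜) (x y : SeparationQuotient E) :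
    ⟪mapOfAdjoint S T hTS x, y⟫_𝕜 = ⟪x, mapOfAdjoint T S hST y⟫_𝕜 := by
  induction x using Quotient.ind
  induction y using Quotient.ind
  exact hST _ _

end SeparationQuotient

end AdjointDescends

section GNS

universe u

variable {A : Type u} [AddCommGroup A] [Module ℂ A] {m : A →ₗ[ℂ] A →ₗ[ℂ] A} {st : A →ₗ⋆[ℂ] A}
  {l : A →ₗ[ℂ] ℂ}

open ComplexOrder in
abbrev gnsCore (hstm : ∀ a b, st (m a b) = m (st b) (st a)) (hstst : ∀ a, st (st a) = a)
    (hlst : ∀ a, l (st a) = conj (l a)) (hlpos : ∀ a, 0 ≤ l (m (st a) a)) :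
    PreInnerProductSpace.Core ℂ A where
  inner a b := l (m (st a) b)
  conj_inner_symm a b := by rw [← hlst, hstm, hstst]
  re_inner_nonneg a := (Complex.nonneg_iff.mp (hlpos a)).1
  add_left a b c := by simp
  smul_left a b c := by simp

open ComplexOrder in
theorem exists_gns_representation (hassoc : ∀ a b c, m (m a b) c = m a (m b c))
    (hstm : ∀ a b, st (m a b) = m (st b) (st a)) (hstst : ∀ a, st (st a) = a)
    (hlst : ∀ a, l (st a) = conj (l a)) (hlpos : ∀ a, 0 ≤ l (m (st a) a)) :
    ∃ (K : Type u) (_ : NormedAddCommGroup K) (_ : InnerProductSpace ℂ K)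
      (π : A →ₗ[ℂ] K →ₗ[ℂ] K) (η : A →ₗ[ℂ] K),
      (∀ a b, π (m a b) = π a ∘ₗ π b) ∧ (∀ a b, η (m a b) = π a (η b)) ∧
      (∀ a b, ⟪η a, η b⟫_ℂ = l (m (st a) b)) ∧
      (∀ a x y, ⟪π (st a) x, y⟫_ℂ = ⟪x, π a y⟫_ℂ) ∧
      ∀ a, (∀ b, m a b = 0) → π a = 0 := by
  let core := gnsCore hstm hstst hlst hlpos
  let _ : SeminormedAddCommGroup A := InnerProductSpace.Core.toSeminormedAddCommGroup (𝕜 := ℂ)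
  let _ : InnerProductSpace ℂ A := InnerProductSpace.ofCore core
  have hadj : ∀ a x y, ⟪m (st a) x, y⟫_ℂ = ⟪x, m a y⟫_ℂ := fun a x y => by
    change l (m (st (m (st a) x)) y) = l (m (st x) (m a y))
    rw [hstm, hstst, hassoc]
  let π : A →ₗ[ℂ] SeparationQuotient A →ₗ[ℂ] SeparationQuotient A :=
    { toFun a := SeparationQuotient.mapOfAdjoint (m a) (m (st a)) (hadj a)
      map_add' a b := LinearMap.ext <| SeparationQuotient.surjective_mk.forall.2 fun x => by
        simp [SeparationQuotient.mk_add]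
      map_smul' c a := LinearMap.ext <| SeparationQuotient.surjective_mk.forall.2 fun x => by
        simp [SeparationQuotient.mk_smul] }
  refine ⟨SeparationQuotient A, inferInstance, inferInstance, π,
    (SeparationQuotient.mkCLM ℂ A).toLinearMap, ?_, ?_, fun a b => rfl, ?_, ?_⟩
  · intro a b
    refine LinearMap.ext <| SeparationQuotient.surjective_mk.forall.2 fun x => ?_
    simp [π, hassoc]
  · intro a b
    simp [π]
  · intro a
    have hadj' : ∀ x y, ⟪m a x, y⟫_ℂ = ⟪x, m (st a) y⟫_ℂ := by
      simpa only [hstst] using hadj (st a)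
    exact SeparationQuotient.inner_mapOfAdjoint_left (hadj a) hadj'
  · intro a ha
    refine LinearMap.ext <| SeparationQuotient.surjective_mk.forall.2 fun x => ?_
    simp [π, ha]

end GNS

end

open ComplexOrder in
theorem ito_minkowski_representation_general
    {A : Type} [AddCommGroup A] [Module ℂ A]
    (m : A →ₗ[ℂ] A →ₗ[ℂ] A) (st : A →ₗ⋆[ℂ] A) (dt : A) (l : A →ₗ[ℂ] ℂ)
    (hassoc : ∀ a b c : A, m (m a b) c = m a (m b c))
    (hstm : ∀ a b : A, st (m a b) = m (st b) (st a))
    (hstst : ∀ a : A, st (st a) = a)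
    (hstdt : st dt = dt)
    (hdtm : ∀ a : A, m dt a = 0)
    (hldt : l dt = 1)
    (hlst : ∀ a : A, l (st a) = starRingEnd ℂ (l a))
    (hlpos : ∀ a : A, 0 ≤ l (m (st a) a)) :
    ∃ (K : Type) (_ : NormedAddCommGroup K) (_ : InnerProductSpace ℂ K)
      (I : A →ₗ[ℂ] ((ℂ × K × ℂ) →ₗ[ℂ] (ℂ × K × ℂ))),
      let J : (ℂ × K × ℂ) → (ℂ × K × ℂ) → ℂ := fun u v =>
        starRingEnd ℂ u.1 * v.2.2 + (inner ℂ u.2.1 v.2.1 : ℂ) + starRingEnd ℂ u.2.2 * v.1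
      (∀ a b : A, I (m a b) = (I a) ∘ₗ (I b)) ∧
      (∀ (a : A) (u v : ℂ × K × ℂ), J (I (st a) u) v = J u (I a v)) ∧
      (∀ a : A, J (0, 0, 1) (I a (0, 0, 1)) = l a) ∧
      (∀ u : ℂ × K × ℂ, I dt u = (u.2.2, 0, 0)) := by
  obtain ⟨K, _, _, π, η, hπ, hη, hinner, hadj, hann⟩ :=
    exists_gns_representation hassoc hstm hstst hlst hlpos
  have hηdt : η dt = 0 := inner_self_eq_zero.mp (by rw [hinner, hstdt, hdtm, map_zero])
  exact ⟨K, _, _, minkowskiRep l st π η, minkowskiRep_mul hstm hstst hπ hη hinner hadj,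
    minkowskiForm_minkowskiRep_star hstst hlst hadj, minkowskiForm_vacuum_minkowskiRep,
    minkowskiRep_apply_of_null hldt hstdt (hann dt hdtm) hηdt⟩

open ComplexOrder in
/-- Every Itô *-algebra can be realized by pseudo-Hermitian triangular
operators on a complex Minkowski space `ℂ ⊕ K ⊕ ℂ` with respect to the indefinite metric
`⟨(α,x,β)|(α',x',β')⟩ = conj α · β' + ⟪x,x'⟫ + conj β · α'`, with vacuum expectation `l`
in the zero-length vector `k₊ = (0,0,1)`, and with `dt` acting as `(α,x,β) ↦ (β,0,0)`. -/
theorem ito_minkowski_representation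
    {A : Type} [AddCommGroup A] [Module ℂ A]
    (m : A →ₗ[ℂ] A →ₗ[ℂ] A) (st : A →ₗ⋆[ℂ] A) (dt : A) (l : A →ₗ[ℂ] ℂ)
    (hassoc : ∀ a b c : A, m (m a b) c = m a (m b c))
    (hstm : ∀ a b : A, st (m a b) = m (st b) (st a))
    (hstst : ∀ a : A, st (st a) = a)
    (hstdt : st dt = dt)
    (hmdt : ∀ a : A, m a dt = 0)
    (hdtm : ∀ a : A, m dt a = 0)
    (hldt : l dt = 1)
    (hlst : ∀ a : A, l (st a) = starRingEnd ℂ (l a))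
    (hlpos : ∀ a : A, 0 ≤ l (m (st a) a)) :
    ∃ (K : Type) (_ : NormedAddCommGroup K) (_ : InnerProductSpace ℂ K)
      (I : A →ₗ[ℂ] ((ℂ × K × ℂ) →ₗ[ℂ] (ℂ × K × ℂ))),
      let J : (ℂ × K × ℂ) → (ℂ × K × ℂ) → ℂ := fun u v =>
        starRingEnd ℂ u.1 * v.2.2 + (inner ℂ u.2.1 v.2.1 : ℂ) + starRingEnd ℂ u.2.2 * v.1
      (∀ a b : A, I (m a b) = (I a) ∘ₗ (I b)) ∧
      (∀ (a : A) (u v : ℂ × K × ℂ), J (I (st a) u) v = J u (I a v)) ∧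
      (∀ a : A, J (0, 0, 1) (I a (0, 0, 1)) = l a) ∧
      (∀ u : ℂ × K × ℂ, I dt u = (u.2.2, 0, 0)) :=
  ito_minkowski_representation_general m st dt l hassoc hstm hstst hstdt hdtm hldt hlst hlpos
end

section
/- Let (𝔞, ⋆, d_t, l) be an Itô *-algebra and let (K, k, i) be a canonical representation: K a complex inner product space spanned by the image of the ℂ-linear map k : 𝔞 → K, and i a ℂ-linear multiplicative map into endomorphisms of K satisfying ⟪k(a), k(b)⟫ = l(a⋆·b) and i(a)(k(b)) = k(a·b) for all a, b. Define the null ideal 𝔦 := {b ∈ 𝔞 : l(b) = 0, and l(b·c) = 0, l(a·b) = 0, l(a·b·c) = 0 for all a, c ∈ 𝔞}. Then for every b ∈ 𝔞 one has (l(b) = 0 and k(b) = 0 and k(b⋆) = 0 and i(b) = 0) if and only if b ∈ 𝔦. In particular, if 𝔦 = {0} then the fundamental representation a ↦ (l(a), k(a), k(a⋆), i(a)) is injective. -/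
/-!
Since `l (a c) = ⟪k (a⋆), k c⟫`, each of `k b = 0`, `k (b⋆) = 0` and `k (b c) = 0` amounts to
the vanishing of one family of values of `l`: one direction pairs the vector with arbitrary
`k`-vectors, the other pairs it with itself. As `k (𝔞)` spans `K`, `i b = 0` means
`k (b c) = i b (k c) = 0` for all `c`. The fundamental representation is additive, so it is
injective once its kernel, the null ideal, is trivial.
-/

section CanonicalRepresentation

variable {A : Type} [AddCommGroup A] [Module ℂ A]
  {K : Type} [NormedAddCommGroup K] [InnerProductSpace ℂ K]
  {m : A →ₗ[ℂ] A →ₗ[ℂ] A} {st : A →ₗ⋆[ℂ] A} {l : A →ₗ[ℂ] ℂ} {k : A →ₗ[ℂ] K}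

theorem l_mul_eq_inner (hstst : ∀ a : A, st (st a) = a)
    (hinner : ∀ a b : A, (inner ℂ (k a) (k b) : ℂ) = l (m (st a) b)) (a c : A) :
    l (m a c) = inner ℂ (k (st a)) (k c) := by
  rw [hinner, hstst]

theorem k_eq_zero_iff_forall_l_mul_left (hstst : ∀ a : A, st (st a) = a)
    (hinner : ∀ a b : A, (inner ℂ (k a) (k b) : ℂ) = l (m (st a) b)) (x : A) :
    k x = 0 ↔ ∀ a, l (m a x) = 0 := by
  refine ⟨fun hx a => ?_, fun h => ?_⟩
  · rw [l_mul_eq_inner hstst hinner, hx, inner_zero_right]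
  · rw [← inner_self_eq_zero (𝕜 := ℂ), hinner]
    exact h (st x)

theorem k_star_eq_zero_iff_forall_l_mul_right (hstst : ∀ a : A, st (st a) = a)
    (hinner : ∀ a b : A, (inner ℂ (k a) (k b) : ℂ) = l (m (st a) b)) (x : A) :
    k (st x) = 0 ↔ ∀ c, l (m x c) = 0 := by
  refine ⟨fun hx c => ?_, fun h => ?_⟩
  · rw [l_mul_eq_inner hstst hinner, hx, inner_zero_left]
  · rw [← inner_self_eq_zero (𝕜 := ℂ), hinner, hstst]
    exact h (st x)

theorem i_eq_zero_iff_forall_k_mul {i : A →ₗ[ℂ] (K →ₗ[ℂ] K)}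
    (hspan : Submodule.span ℂ (Set.range k) = ⊤) (hik : ∀ a b : A, i a (k b) = k (m a b))
    (b : A) : i b = 0 ↔ ∀ c, k (m b c) = 0 := by
  refine ⟨fun hb c => ?_, fun h => LinearMap.ext_on_range hspan fun c => ?_⟩
  · rw [← hik, hb, LinearMap.zero_apply]
  · rw [hik, h, LinearMap.zero_apply]

theorem fundamental_eq_zero_iff {i : A →ₗ[ℂ] (K →ₗ[ℂ] K)} (hstst : ∀ a : A, st (st a) = a)
    (hspan : Submodule.span ℂ (Set.range k) = ⊤)
    (hinner : ∀ a b : A, (inner ℂ (k a) (k b) : ℂ) = l (m (st a) b))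
    (hik : ∀ a b : A, i a (k b) = k (m a b)) (b : A) :
    (l b = 0 ∧ k b = 0 ∧ k (st b) = 0 ∧ i b = 0) ↔
      (l b = 0 ∧ ∀ a c : A, l (m b c) = 0 ∧ l (m a b) = 0 ∧ l (m a (m b c)) = 0) := by
  rw [k_star_eq_zero_iff_forall_l_mul_right hstst hinner]
  simp only [k_eq_zero_iff_forall_l_mul_left hstst hinner, i_eq_zero_iff_forall_k_mul hspan hik,
    forall_and, forall_const]
  exact and_congr_right fun _ =>
    ⟨fun ⟨hleft, hright, hmid⟩ => ⟨hright, hleft, fun a c => hmid c a⟩,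
      fun ⟨hright, hleft, hmid⟩ => ⟨hleft, hright, fun c a => hmid a c⟩⟩

end CanonicalRepresentation

open ComplexOrder in
theorem ito_null_ideal_and_faithfulness_general
    {A : Type} [AddCommGroup A] [Module ℂ A]
    (m : A →ₗ[ℂ] A →ₗ[ℂ] A) (st : A →ₗ⋆[ℂ] A) (l : A →ₗ[ℂ] ℂ)
    (hstst : ∀ a : A, st (st a) = a)
    {K : Type} [NormedAddCommGroup K] [InnerProductSpace ℂ K]
    (k : A →ₗ[ℂ] K) (i : A →ₗ[ℂ] (K →ₗ[ℂ] K))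
    (hspan : Submodule.span ℂ (Set.range k) = ⊤)
    (hinner : ∀ a b : A, (inner ℂ (k a) (k b) : ℂ) = l (m (st a) b))
    (hik : ∀ a b : A, i a (k b) = k (m a b)) :
    (∀ b : A,
      (l b = 0 ∧ k b = 0 ∧ k (st b) = 0 ∧ i b = 0) ↔
      (l b = 0 ∧ ∀ a c : A, l (m b c) = 0 ∧ l (m a b) = 0 ∧ l (m a (m b c)) = 0)) ∧
    ((∀ b : A, (l b = 0 ∧ ∀ a c : A,
        l (m b c) = 0 ∧ l (m a b) = 0 ∧ l (m a (m b c)) = 0) → b = 0) →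
      Function.Injective fun a : A => (l a, k a, k (st a), i a)) := by
  have key := fundamental_eq_zero_iff hstst hspan hinner hik
  refine ⟨key, fun hnull => ?_⟩
  let fundamental : A →+ ℂ × K × K × (K →ₗ[ℂ] K) :=
    l.toAddMonoidHom.prod <| k.toAddMonoidHom.prod <|
      (k.toAddMonoidHom.comp st.toAddMonoidHom).prod i.toAddMonoidHom
  refine (injective_iff_map_eq_zero fundamental).2 fun b hb => hnull b ((key b).1 ?_)
  simpa [fundamental] using hb

open ComplexOrder in
/-- For a canonical representation `(K, k, i)` of an Itô *-algebra,
an element `b` satisfies `l b = 0`, `k b = 0`, `k (b⋆) = 0`, `i b = 0` precisely when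
`b` lies in the null ideal `𝔦`; consequently, if `𝔦 = {0}` then the fundamental
representation `a ↦ (l a, k a, k (a⋆), i a)` is injective (faithful). -/
theorem ito_null_ideal_and_faithfulness
    {A : Type} [AddCommGroup A] [Module ℂ A]
    (m : A →ₗ[ℂ] A →ₗ[ℂ] A) (st : A →ₗ⋆[ℂ] A) (dt : A) (l : A →ₗ[ℂ] ℂ)
    (hassoc : ∀ a b c : A, m (m a b) c = m a (m b c))
    (hstm : ∀ a b : A, st (m a b) = m (st b) (st a))
    (hstst : ∀ a : A, st (st a) = a)
    (hstdt : st dt = dt)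
    (hmdt : ∀ a : A, m a dt = 0)
    (hdtm : ∀ a : A, m dt a = 0)
    (hldt : l dt = 1)
    (hlst : ∀ a : A, l (st a) = starRingEnd ℂ (l a))
    (hlpos : ∀ a : A, 0 ≤ l (m (st a) a))
    {K : Type} [NormedAddCommGroup K] [InnerProductSpace ℂ K]
    (k : A →ₗ[ℂ] K) (i : A →ₗ[ℂ] (K →ₗ[ℂ] K))
    (hspan : Submodule.span ℂ (Set.range k) = ⊤)
    (hmult : ∀ a b : A, i (m a b) = (i a) ∘ₗ (i b))
    (hinner : ∀ a b : A, (inner ℂ (k a) (k b) : ℂ) = l (m (st a) b))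
    (hik : ∀ a b : A, i a (k b) = k (m a b)) :
    (∀ b : A,
      (l b = 0 ∧ k b = 0 ∧ k (st b) = 0 ∧ i b = 0) ↔
      (l b = 0 ∧ ∀ a c : A, l (m b c) = 0 ∧ l (m a b) = 0 ∧ l (m a (m b c)) = 0)) ∧
    ((∀ b : A, (l b = 0 ∧ ∀ a c : A,
        l (m b c) = 0 ∧ l (m a b) = 0 ∧ l (m a (m b c)) = 0) → b = 0) →
      Function.Injective fun a : A => (l a, k a, k (st a), i a)) :=
  ito_null_ideal_and_faithfulness_general m st l hstst k i hspan hinner hik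
end

section
/- Let (𝔞, ⋆, d_t, l) be an Itô *-algebra with a quotient identity e. For every a ∈ 𝔞, set c := a∘e + e∘a − e∘(a∘e) and b := a − c. Then b∘e = 0 and e∘b = 0; that is, every element of 𝔞 decomposes as a = b + c with b in the Brownian part 𝔟 := {b ∈ 𝔞 : b∘e = 0 = e∘b} and c in the Lévy part 𝔠 := {x∘e + e∘x − e∘(x∘e) : x ∈ 𝔞}. -/
/-- The factor product `a∘b := a·b − l(a·b)·d_t` of an Itô *-algebra. -/
def factorProd {A : Type} [AddCommGroup A] [Module ℂ A]
    (m : A →ₗ[ℂ] A →ₗ[ℂ] A) (l : A →ₗ[ℂ] ℂ) (dt : A) (a b : A) : A :=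
  m a b - l (m a b) • dt

lemma factorProd_assoc {A : Type} [AddCommGroup A] [Module ℂ A]
    (m : A →ₗ[ℂ] A →ₗ[ℂ] A) (l : A →ₗ[ℂ] ℂ) (dt : A)
    (hassoc : ∀ a b c : A, m (m a b) c = m a (m b c))
    (hmdt : ∀ a : A, m a dt = 0) (hdtm : ∀ a : A, m dt a = 0)
    (a b c : A) :
    factorProd m l dt (factorProd m l dt a b) c
      = factorProd m l dt a (factorProd m l dt b c) := by
  simp [factorProd, map_sub, map_smul, hmdt, hdtm, hassoc]

lemma factorProd_sub_left {A : Type} [AddCommGroup A] [Module ℂ A]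
    (m : A →ₗ[ℂ] A →ₗ[ℂ] A) (l : A →ₗ[ℂ] ℂ) (dt : A) (x y b : A) :
    factorProd m l dt (x - y) b = factorProd m l dt x b - factorProd m l dt y b := by
  simp only [factorProd, map_sub, LinearMap.sub_apply, sub_smul]
  abel

lemma factorProd_sub_right {A : Type} [AddCommGroup A] [Module ℂ A]
    (m : A →ₗ[ℂ] A →ₗ[ℂ] A) (l : A →ₗ[ℂ] ℂ) (dt : A) (a x y : A) :
    factorProd m l dt a (x - y) = factorProd m l dt a x - factorProd m l dt a y := by
  simp only [factorProd, map_sub, sub_smul]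
  abel

lemma factorProd_add_left {A : Type} [AddCommGroup A] [Module ℂ A]
    (m : A →ₗ[ℂ] A →ₗ[ℂ] A) (l : A →ₗ[ℂ] ℂ) (dt : A) (x y b : A) :
    factorProd m l dt (x + y) b = factorProd m l dt x b + factorProd m l dt y b := by
  simp only [factorProd, map_add, LinearMap.add_apply, add_smul]
  abel

lemma factorProd_add_right {A : Type} [AddCommGroup A] [Module ℂ A]
    (m : A →ₗ[ℂ] A →ₗ[ℂ] A) (l : A →ₗ[ℂ] ℂ) (dt : A) (a x y : A) :
    factorProd m l dt a (x + y) = factorProd m l dt a x + factorProd m l dt a y := by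
  simp only [factorProd, map_add, add_smul]
  abel

open ComplexOrder in
/-- In an Itô *-algebra with a quotient identity `e`, every element
decomposes as `a = b + c` with `c := a∘e + e∘a − e∘(a∘e)` in the Lévy part and
`b := a − c` in the Brownian part `𝔟 = {b : b∘e = 0 = e∘b}`. -/
theorem ito_brownian_levy_decomposition
    {A : Type} [AddCommGroup A] [Module ℂ A]
    (m : A →ₗ[ℂ] A →ₗ[ℂ] A) (st : A →ₗ⋆[ℂ] A) (dt : A) (l : A →ₗ[ℂ] ℂ)
    (hassoc : ∀ a b c : A, m (m a b) c = m a (m b c))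
    (hstm : ∀ a b : A, st (m a b) = m (st b) (st a))
    (hstst : ∀ a : A, st (st a) = a)
    (hstdt : st dt = dt)
    (hmdt : ∀ a : A, m a dt = 0)
    (hdtm : ∀ a : A, m dt a = 0)
    (hldt : l dt = 1)
    (hlst : ∀ a : A, l (st a) = starRingEnd ℂ (l a))
    (hlpos : ∀ a : A, 0 ≤ l (m (st a) a))
    (e : A) (hste : st e = e)
    (heide : factorProd m l dt e e = e)
    (hqid : ∀ a c : A, factorProd m l dt (factorProd m l dt a e) c = factorProd m l dt a c) :
    ∀ a : A,
      let c := factorProd m l dt a e + factorProd m l dt e a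
        - factorProd m l dt e (factorProd m l dt a e)
      let b := a - c
      factorProd m l dt b e = 0 ∧ factorProd m l dt e b = 0 ∧ a = b + c ∧
      b ∈ {x : A | factorProd m l dt x e = 0 ∧ factorProd m l dt e x = 0} ∧
      c ∈ {y : A | ∃ x : A, y = factorProd m l dt x e + factorProd m l dt e x
        - factorProd m l dt e (factorProd m l dt x e)} := by
  intro a c b
  have hA := factorProd_assoc m l dt hassoc hmdt hdtm
  -- (a∘e)∘e = a∘e
  have h1 : factorProd m l dt (factorProd m l dt a e) e = factorProd m l dt a e :=
    hqid a e
  -- e∘(e∘x) = e∘x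
  have h2 : ∀ x : A, factorProd m l dt e (factorProd m l dt e x) = factorProd m l dt e x := by
    intro x; rw [← hA, heide]
  have hbe : factorProd m l dt b e = 0 := by
    show factorProd m l dt (a - c) e = 0
    rw [factorProd_sub_left]
    show _ - factorProd m l dt (factorProd m l dt a e + factorProd m l dt e a
        - factorProd m l dt e (factorProd m l dt a e)) e = 0
    rw [factorProd_sub_left, factorProd_add_left, h1, hA e (factorProd m l dt a e) e, h1,
      hA e a e]
    abel
  have heb : factorProd m l dt e b = 0 := by
    show factorProd m l dt e (a - c) = 0
    rw [factorProd_sub_right]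
    show _ - factorProd m l dt e (factorProd m l dt a e + factorProd m l dt e a
        - factorProd m l dt e (factorProd m l dt a e)) = 0
    rw [factorProd_sub_right, factorProd_add_right, h2, h2]
    abel
  exact ⟨hbe, heb, by show a = a - c + c; abel, ⟨hbe, heb⟩, ⟨a, rfl⟩⟩
end

section
/- Let (𝔞, ⋆, d_t, l) be an Itô *-algebra with a quotient identity e. Then the Brownian and Lévy parts are mutually orthogonal in the algebra: for every b ∈ 𝔞 with b∘e = 0 = e∘b and every x ∈ 𝔞, setting c := x∘e + e∘x − e∘(x∘e), one has b·c = 0 and c·b = 0 (the products vanish exactly, not merely modulo ℂ·d_t). -/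
open ComplexOrder in
/-- In an Itô *-algebra with a quotient identity `e`, the Brownian and
Lévy parts are exactly orthogonal: if `b∘e = 0 = e∘b` and `c = x∘e + e∘x − e∘(x∘e)`,
then `b·c = 0` and `c·b = 0` (not merely modulo `ℂ·d_t`). -/
theorem ito_brownian_levy_orthogonal
    {A : Type} [AddCommGroup A] [Module ℂ A]
    (m : A →ₗ[ℂ] A →ₗ[ℂ] A) (st : A →ₗ⋆[ℂ] A) (dt : A) (l : A →ₗ[ℂ] ℂ)
    (hassoc : ∀ a b c : A, m (m a b) c = m a (m b c))
    (hstm : ∀ a b : A, st (m a b) = m (st b) (st a))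
    (hstst : ∀ a : A, st (st a) = a)
    (hstdt : st dt = dt)
    (hmdt : ∀ a : A, m a dt = 0)
    (hdtm : ∀ a : A, m dt a = 0)
    (hldt : l dt = 1)
    (hlst : ∀ a : A, l (st a) = starRingEnd ℂ (l a))
    (hlpos : ∀ a : A, 0 ≤ l (m (st a) a))
    (e : A) (hste : st e = e)
    (heide : factorProd m l dt e e = e)
    (hqid : ∀ a c : A, factorProd m l dt (factorProd m l dt a e) c = factorProd m l dt a c)
    (b : A) (hbe : factorProd m l dt b e = 0) (heb : factorProd m l dt e b = 0)
    (x : A) :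
    m b (factorProd m l dt x e + factorProd m l dt e x
        - factorProd m l dt e (factorProd m l dt x e)) = 0 ∧
    m (factorProd m l dt x e + factorProd m l dt e x
        - factorProd m l dt e (factorProd m l dt x e)) b = 0 := by

  have hbe' : m b e = l (m b e) • dt := sub_eq_zero.mp hbe
  have heb' : m e b = l (m e b) • dt := sub_eq_zero.mp heb
  -- From the quotient identity: b ∘ y = 0 for all y, i.e. m b y = l (m b y) • dt
  have hb0 : ∀ y : A, m b y = l (m b y) • dt := by
    intro y
    have h := hqid b y
    rw [hbe] at h
    simp only [factorProd, map_zero, LinearMap.zero_apply, zero_sub, smul_zero, neg_zero,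
      zero_smul, neg_eq_zero] at h
    exact sub_eq_zero.mp h.symm
  -- st b is also Brownian: (st b) ∘ e = 0
  have hleq : l (m (st b) e) = (starRingEnd ℂ) (l (m e b)) := by
    conv_lhs => rw [← hste, ← hstm, hlst]
  have hstb : factorProd m l dt (st b) e = 0 := by
    have h := congrArg st heb
    simp only [factorProd, map_sub, map_smulₛₗ, hstm, hste, hstdt, map_zero] at h
    simpa only [factorProd, hleq] using h
  have hstb0 : ∀ y : A, m (st b) y = l (m (st b) y) • dt := by
    intro y
    have h := hqid (st b) y
    rw [hstb] at h
    simp only [factorProd, map_zero, LinearMap.zero_apply, zero_sub, smul_zero, neg_zero,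
      zero_smul, neg_eq_zero] at h
    exact sub_eq_zero.mp h.symm
  have hxb : m x b = (starRingEnd ℂ) (l (m (st b) (st x))) • dt := by
    calc m x b = st (st (m x b)) := (hstst _).symm
      _ = st (m (st b) (st x)) := by rw [hstm]
      _ = st (l (m (st b) (st x)) • dt) := congrArg st (hstb0 (st x))
      _ = _ := by rw [map_smulₛₗ, hstdt]
  -- term-by-term computations, left multiplication by b
  have hA : m b (factorProd m l dt x e) = 0 := by
    simp only [factorProd, map_sub, map_smul, hmdt, smul_zero, sub_zero]
    rw [← hassoc, hb0 x]
    simp only [map_smul, LinearMap.smul_apply, hdtm, smul_zero]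
  have hB : m b (factorProd m l dt e x) = 0 := by
    simp only [factorProd, map_sub, map_smul, hmdt, smul_zero, sub_zero]
    rw [← hassoc, hbe']
    simp only [map_smul, LinearMap.smul_apply, hdtm, smul_zero]
  have hC : m b (factorProd m l dt e (factorProd m l dt x e)) = 0 := by
    simp only [factorProd, map_sub, map_smul, hmdt, smul_zero, sub_zero]
    rw [← hassoc, hbe']
    simp only [map_smul, LinearMap.smul_apply, hdtm, smul_zero]
  -- right multiplication by b
  have hA' : m (factorProd m l dt x e) b = 0 := by
    simp only [factorProd, map_sub, map_smul, LinearMap.sub_apply, LinearMap.smul_apply,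
      hdtm, smul_zero, sub_zero]
    rw [hassoc, heb']
    simp only [map_smul, hmdt, smul_zero]
  have hB' : m (factorProd m l dt e x) b = 0 := by
    simp only [factorProd, map_sub, map_smul, LinearMap.sub_apply, LinearMap.smul_apply,
      hdtm, smul_zero, sub_zero]
    rw [hassoc, hxb]
    simp only [map_smul, hmdt, smul_zero]
  have hC' : m (factorProd m l dt e (factorProd m l dt x e)) b = 0 := by
    have key : factorProd m l dt e (factorProd m l dt x e)
        = m e (factorProd m l dt x e) - l (m e (factorProd m l dt x e)) • dt := rfl
    rw [key, map_sub, LinearMap.sub_apply, map_smul, LinearMap.smul_apply, hdtm, smul_zero,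
      sub_zero, hassoc, hA', map_zero]
  constructor
  · simp only [map_add, map_sub, hA, hB, hC, add_zero, sub_zero, zero_add, zero_sub, neg_zero]
  · simp only [map_add, map_sub, LinearMap.add_apply, LinearMap.sub_apply, hA', hB', hC',
      add_zero, sub_zero, zero_add, zero_sub, neg_zero]
end

section
/- Let (𝔞, ⋆, d_t, l) be an Itô *-algebra with a quotient identity e. Then the Brownian part 𝔟 := {b ∈ 𝔞 : b∘e = 0 = e∘b} is a ℂ-linear subspace of 𝔞 which is invariant under the involution (b ∈ 𝔟 implies b⋆ ∈ 𝔟), contains d_t, and is a second-order nilpotent subalgebra modulo ℂ·d_t: for all b, b' ∈ 𝔟, b·b' = l(b·b')·d_t. In particular 𝔟 is a quantum Brownian (Wiener) Itô subalgebra. -/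
open ComplexOrder in
/-- In an Itô *-algebra with a quotient identity `e`, the Brownian part
`𝔟 = {b : b∘e = 0 = e∘b}` is a ⋆-invariant ℂ-linear subspace containing `d_t`, and it is
second-order nilpotent modulo `ℂ·d_t`: `b·b' = l(b·b')·d_t` for `b, b' ∈ 𝔟`. -/
theorem ito_brownian_part_is_wiener_subalgebra
    {A : Type} [AddCommGroup A] [Module ℂ A]
    (m : A →ₗ[ℂ] A →ₗ[ℂ] A) (st : A →ₗ⋆[ℂ] A) (dt : A) (l : A →ₗ[ℂ] ℂ)
    (hassoc : ∀ a b c : A, m (m a b) c = m a (m b c))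
    (hstm : ∀ a b : A, st (m a b) = m (st b) (st a))
    (hstst : ∀ a : A, st (st a) = a)
    (hstdt : st dt = dt)
    (hmdt : ∀ a : A, m a dt = 0)
    (hdtm : ∀ a : A, m dt a = 0)
    (hldt : l dt = 1)
    (hlst : ∀ a : A, l (st a) = starRingEnd ℂ (l a))
    (hlpos : ∀ a : A, 0 ≤ l (m (st a) a))
    (e : A) (hste : st e = e)
    (heide : factorProd m l dt e e = e)
    (hqid : ∀ a c : A, factorProd m l dt (factorProd m l dt a e) c = factorProd m l dt a c) :
    let B := {x : A | factorProd m l dt x e = 0 ∧ factorProd m l dt e x = 0}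
    (0 : A) ∈ B ∧
    (∀ b₁ b₂ : A, b₁ ∈ B → b₂ ∈ B → b₁ + b₂ ∈ B) ∧
    (∀ (z : ℂ) (b : A), b ∈ B → z • b ∈ B) ∧
    (∀ b : A, b ∈ B → st b ∈ B) ∧
    dt ∈ B ∧
    (∀ b b' : A, b ∈ B → b' ∈ B → m b b' = l (m b b') • dt) := by
  intro B
  have hmem : ∀ x : A, x ∈ B ↔
      (factorProd m l dt x e = 0 ∧ factorProd m l dt e x = 0) := fun _ => Iff.rfl
  refine ⟨?_, ?_, ?_, ?_, ?_, ?_⟩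
  · constructor <;> simp [factorProd]
  · rintro b₁ b₂ ⟨h1, h1'⟩ ⟨h2, h2'⟩
    constructor
    · have : factorProd m l dt (b₁ + b₂) e
          = factorProd m l dt b₁ e + factorProd m l dt b₂ e := by
        simp [factorProd, add_smul]; abel
      rw [this, h1, h2, add_zero]
    · have : factorProd m l dt e (b₁ + b₂)
          = factorProd m l dt e b₁ + factorProd m l dt e b₂ := by
        simp [factorProd, add_smul]; abel
      rw [this, h1', h2', add_zero]
  · rintro z b ⟨h1, h1'⟩
    constructor
    · have : factorProd m l dt (z • b) e = z • factorProd m l dt b e := by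
        simp [factorProd, smul_sub, smul_smul]
      rw [this, h1, smul_zero]
    · have : factorProd m l dt e (z • b) = z • factorProd m l dt e b := by
        simp [factorProd, smul_sub, smul_smul]
      rw [this, h1', smul_zero]
  · rintro b ⟨h1, h1'⟩
    have key : ∀ x : A, st (factorProd m l dt x e) = factorProd m l dt e (st x) := by
      intro x
      simp only [factorProd, map_sub, map_smulₛₗ, hstm, hste, hstdt]
      rw [← hlst (m x e), hstm, hste]
    have key' : ∀ x : A, st (factorProd m l dt e x) = factorProd m l dt (st x) e := by
      intro x
      simp only [factorProd, map_sub, map_smulₛₗ, hstm, hste, hstdt]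
      rw [← hlst (m e x), hstm, hste]
    constructor
    · rw [← key' b, h1', map_zero]
    · rw [← key b, h1, map_zero]
  · constructor
    · simp [factorProd, hdtm]
    · simp [factorProd, hmdt]
  · rintro b b' ⟨h1, _⟩ _
    have := hqid b b'
    rw [h1] at this
    have h0 : factorProd m l dt (0 : A) b' = 0 := by simp [factorProd]
    rw [h0] at this
    have := this.symm
    rw [factorProd, sub_eq_zero] at this
    exact this
end

section
/- Every Itô *-algebra (𝔞, ⋆, d_t, l) whose underlying complex vector space has dimension 2 over ℂ is either of Wiener type or of Poisson type: either (x·y)·z = 0 for all x, y, z ∈ 𝔞 (second-order nilpotent), or there exists a nonzero element e ∈ 𝔞 with e·e = e (so ℂ·e is a unital one-dimensional subalgebra). -/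
open ComplexOrder in
/-- Every two-dimensional Itô *-algebra is either of Wiener type
(second-order nilpotent) or of Poisson type (contains a nonzero idempotent, hence a
unital one-dimensional subalgebra). -/
theorem two_dimensional_ito_algebra_wiener_or_poisson
    {A : Type} [AddCommGroup A] [Module ℂ A]
    (m : A →ₗ[ℂ] A →ₗ[ℂ] A) (st : A →ₗ⋆[ℂ] A) (dt : A) (l : A →ₗ[ℂ] ℂ)
    (hassoc : ∀ a b c : A, m (m a b) c = m a (m b c))
    (hstm : ∀ a b : A, st (m a b) = m (st b) (st a))
    (hstst : ∀ a : A, st (st a) = a)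
    (hstdt : st dt = dt)
    (hmdt : ∀ a : A, m a dt = 0)
    (hdtm : ∀ a : A, m dt a = 0)
    (hldt : l dt = 1)
    (hlst : ∀ a : A, l (st a) = starRingEnd ℂ (l a))
    (hlpos : ∀ a : A, 0 ≤ l (m (st a) a))
    (hdim : Module.finrank ℂ A = 2) :
    (∀ x y z : A, m (m x y) z = 0) ∨ (∃ e : A, e ≠ 0 ∧ m e e = e) := by
  haveI : FiniteDimensional ℂ A := FiniteDimensional.of_finrank_pos (by omega)
  have hdt0 : dt ≠ 0 := by
    intro h
    rw [h, map_zero] at hldt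
    exact one_ne_zero hldt.symm
  -- find b outside span {dt}
  have hspan_ne : Submodule.span ℂ {dt} ≠ ⊤ := by
    intro h
    have := finrank_span_singleton (K := ℂ) hdt0
    rw [h, finrank_top] at this
    omega
  obtain ⟨b, hb⟩ : ∃ b : A, b ∉ Submodule.span ℂ {dt} := by
    by_contra h
    push_neg at h
    exact hspan_ne (Submodule.eq_top_iff'.mpr h)
  have hbdt0 : b ≠ 0 := fun h => hb (h ▸ Submodule.zero_mem _)
  -- linear independence of ![dt, b]
  have hli : LinearIndependent ℂ ![dt, b] := by
    rw [LinearIndependent.pair_iff]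
    intro s t hst
    have ht : t = 0 := by
      by_contra ht
      apply hb
      have h3 : t • b = -(s • dt) := eq_neg_of_add_eq_zero_left (by rw [add_comm]; exact hst)
      have h4 : b = (t⁻¹ * -s) • dt := by
        rw [mul_smul, neg_smul, ← h3, smul_smul, inv_mul_cancel₀ ht, one_smul]
      rw [h4]
      exact Submodule.smul_mem _ _ (Submodule.mem_span_singleton_self dt)
    subst ht
    simp only [zero_smul, add_zero] at hst
    exact ⟨(smul_eq_zero.mp hst).resolve_right hdt0, rfl⟩
  -- span {dt, b} = ⊤
  have hspan : Submodule.span ℂ ({dt, b} : Set A) = ⊤ := by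
    apply Submodule.eq_top_of_finrank_eq
    have h1 : ({dt, b} : Set A) = Set.range ![dt, b] := by
      simp [Matrix.range_cons, Matrix.range_empty]
      exact Set.pair_comm dt b
    rw [h1, finrank_span_eq_card hli, hdim]
    simp
  have hmem : ∀ x : A, ∃ c d : ℂ, c • dt + d • b = x := by
    intro x
    have : x ∈ Submodule.span ℂ ({dt, b} : Set A) := hspan ▸ Submodule.mem_top
    exact Submodule.mem_span_pair.mp this
  obtain ⟨α, β, hαβ⟩ := hmem (m b b)
  -- key formula: m x y = (coefficients) • (m b b)
  have hprod : ∀ x y : A, ∃ c : ℂ, m x y = c • m b b := by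
    intro x y
    obtain ⟨c₁, c₂, hx⟩ := hmem x
    obtain ⟨d₁, d₂, hy⟩ := hmem y
    refine ⟨c₂ * d₂, ?_⟩
    rw [← hx, ← hy]
    simp [map_add, map_smul, hdtm, hmdt, smul_smul, mul_comm]
  by_cases hβ : β = 0
  · left
    intro x y z
    obtain ⟨c, hc⟩ := hprod x y
    rw [hc, ← hαβ, hβ]
    simp [map_add, map_smul, hdtm]
  · right
    refine ⟨(α / β ^ 2) • dt + (1 / β) • b, ?_, ?_⟩
    · intro h
      have := hli
      rw [LinearIndependent.pair_iff] at this
      have h2 := this (α / β ^ 2) (1 / β) h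
      exact (one_div_ne_zero hβ) h2.2
    · have key : m ((α / β ^ 2) • dt + (1 / β) • b) ((α / β ^ 2) • dt + (1 / β) • b)
          = ((1 / β) * (1 / β)) • (α • dt + β • b) := by
        rw [hαβ]
        simp [map_add, map_smul, hdtm, hdtm, hmdt, smul_smul]
      rw [key]
      match_scalars <;> field_simp <;> try ring
      all_goals tauto
end

section
/- Let (𝔞, ⋆, d_t, l) be an Itô *-algebra, V a complex inner product space, and π a ℂ-linear multiplicative map from 𝔞 into the ℂ-linear endomorphisms of V satisfying ⟪π(a⋆)x, y⟫ = ⟪x, π(a)y⟫ for all a ∈ 𝔞 and x, y ∈ V. Then π(d_t) = 0. Consequently, since d_t ≠ 0 (because l(d_t) = 1), no such π is injective: an Itô *-algebra admits no faithful operator representation on a (positive definite) Euclidean space by operators for which ⋆ becomes the Hermitian adjoint. -/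
theorem LinearMap.IsSymmetric.eq_zero_of_comp_self_eq_zero {𝕜 E : Type*} [RCLike 𝕜]
    [NormedAddCommGroup E] [InnerProductSpace 𝕜 E] {T : E →ₗ[𝕜] E} (hT : T.IsSymmetric)
    (hTT : T ∘ₗ T = 0) : T = 0 := by
  ext x
  have hnorm : inner 𝕜 (T x) (T x) = 0 := by
    rw [hT, ← comp_apply, hTT, zero_apply, inner_zero_right]
  simpa using hnorm

open ComplexOrder in
theorem ito_no_euclidean_representation_general
    {A : Type} [AddCommGroup A] [Module ℂ A]
    (m : A →ₗ[ℂ] A →ₗ[ℂ] A) (st : A →ₗ⋆[ℂ] A) (dt : A) (l : A →ₗ[ℂ] ℂ)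
    (hstdt : st dt = dt)
    (hdtm : ∀ a : A, m dt a = 0)
    (hldt : l dt = 1)
    {V : Type} [NormedAddCommGroup V] [InnerProductSpace ℂ V]
    (π : A →ₗ[ℂ] (V →ₗ[ℂ] V))
    (hπmult : ∀ a b : A, π (m a b) = (π a) ∘ₗ (π b))
    (hπadj : ∀ (a : A) (x y : V), (inner ℂ (π (st a) x) y : ℂ) = inner ℂ x (π a y)) :
    π dt = 0 ∧ ¬ Function.Injective π := by
  have hsymm : (π dt).IsSymmetric := fun x y => by rw [← hπadj, hstdt]
  have hsq : π dt ∘ₗ π dt = 0 := by rw [← hπmult, hdtm, map_zero]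
  have hzero : π dt = 0 := hsymm.eq_zero_of_comp_self_eq_zero hsq
  have hdt : dt ≠ 0 := by
    rintro rfl
    simp at hldt
  exact ⟨hzero, fun hinj => hdt (hinj (by rw [hzero, map_zero]))⟩

open ComplexOrder in
/-- An Itô *-algebra has no faithful Hermitian operator representation
on a (positive definite) complex inner product space: any ℂ-linear multiplicative
⋆-representation `π` kills `d_t`, and since `d_t ≠ 0` no such `π` is injective. -/
theorem ito_no_euclidean_representation
    {A : Type} [AddCommGroup A] [Module ℂ A]
    (m : A →ₗ[ℂ] A →ₗ[ℂ] A) (st : A →ₗ⋆[ℂ] A) (dt : A) (l : A →ₗ[ℂ] ℂ)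
    (hassoc : ∀ a b c : A, m (m a b) c = m a (m b c))
    (hstm : ∀ a b : A, st (m a b) = m (st b) (st a))
    (hstst : ∀ a : A, st (st a) = a)
    (hstdt : st dt = dt)
    (hmdt : ∀ a : A, m a dt = 0)
    (hdtm : ∀ a : A, m dt a = 0)
    (hldt : l dt = 1)
    (hlst : ∀ a : A, l (st a) = starRingEnd ℂ (l a))
    (hlpos : ∀ a : A, 0 ≤ l (m (st a) a))
    {V : Type} [NormedAddCommGroup V] [InnerProductSpace ℂ V]
    (π : A →ₗ[ℂ] (V →ₗ[ℂ] V))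
    (hπmult : ∀ a b : A, π (m a b) = (π a) ∘ₗ (π b))
    (hπadj : ∀ (a : A) (x y : V), (inner ℂ (π (st a) x) y : ℂ) = inner ℂ x (π a y)) :
    π dt = 0 ∧ ¬ Function.Injective π :=
  ito_no_euclidean_representation_general m st dt l hstdt hdtm hldt π hπmult hπadj
end

section
/- Let (𝔞, ⋆, d_t, l) be an Itô *-algebra, V a complex vector space, B : V × V → ℂ a Hermitian sesquilinear form (conjugate-linear in the first argument, B(x,y) = conj(B(y,x))), π a ℂ-linear multiplicative map from 𝔞 into the endomorphisms of V with B(π(a)x, y) = B(x, π(a⋆)y) for all a, x, y, and k ∈ V a vector with B(k, π(a)k) = l(a) for all a ∈ 𝔞. Then the vector k₊ := k − (B(k,k)/2)·π(d_t)k satisfies B(k₊, π(a)k₊) = l(a) for all a ∈ 𝔞, and B(k₊, k₊) = 0. Thus the expectation vector of any such representation can be normalized to have zero length. -/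
open ComplexOrder in
/-- Given a pseudo-Euclidean ⋆-representation `π` of an Itô *-algebra
with expectation vector `k` (so `B(k, π(a)k) = l(a)`), the normalized vector
`k₊ = k − (B(k,k)/2)·π(d_t)k` still reproduces the state and has zero length. -/
theorem ito_expectation_vector_normalization
    {A : Type} [AddCommGroup A] [Module ℂ A]
    (m : A →ₗ[ℂ] A →ₗ[ℂ] A) (st : A →ₗ⋆[ℂ] A) (dt : A) (l : A →ₗ[ℂ] ℂ)
    (hassoc : ∀ a b c : A, m (m a b) c = m a (m b c))
    (hstm : ∀ a b : A, st (m a b) = m (st b) (st a))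
    (hstst : ∀ a : A, st (st a) = a)
    (hstdt : st dt = dt)
    (hmdt : ∀ a : A, m a dt = 0)
    (hdtm : ∀ a : A, m dt a = 0)
    (hldt : l dt = 1)
    (hlst : ∀ a : A, l (st a) = starRingEnd ℂ (l a))
    (hlpos : ∀ a : A, 0 ≤ l (m (st a) a))
    {V : Type} [AddCommGroup V] [Module ℂ V]
    (B : V →ₛₗ[starRingEnd ℂ] V →ₗ[ℂ] ℂ)
    (hBherm : ∀ x y : V, B x y = starRingEnd ℂ (B y x))
    (π : A →ₗ[ℂ] (V →ₗ[ℂ] V))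
    (hπmult : ∀ a b : A, π (m a b) = (π a) ∘ₗ (π b))
    (hπadj : ∀ (a : A) (x y : V), B (π a x) y = B x (π (st a) y))
    (k : V) (hk : ∀ a : A, B k (π a k) = l a) :
    (∀ a : A, B (k - (B k k / 2) • π dt k) (π a (k - (B k k / 2) • π dt k)) = l a) ∧
    B (k - (B k k / 2) • π dt k) (k - (B k k / 2) • π dt k) = 0 := by
  set u : V := π dt k with hu
  set c : ℂ := B k k / 2 with hc
  -- π a ∘ π dt = 0 and π dt ∘ π a = 0
  have hπa_dt : ∀ a : A, π a (π dt k) = 0 := by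
    intro a
    have : π (m a dt) = (π a) ∘ₗ (π dt) := hπmult a dt
    rw [hmdt a] at this
    have := congrArg (fun f => (f : V →ₗ[ℂ] V) k) this.symm
    simpa using this
  have hBuk : B k u = 1 := by
    simpa [hu, hldt] using hk dt
  have hBku : B u k = 1 := by
    rw [hBherm u k, hBuk]; simp
  have hBuu : B u u = 0 := by
    have : B u u = B k (π (st dt) u) := hπadj dt k u
    rw [hstdt] at this
    rw [this, hu, hπa_dt dt]
    simp
  have hBuak : ∀ a : A, B u (π a k) = 0 := by
    intro a
    have : B u (π a k) = B k (π (st dt) (π a k)) := hπadj dt k (π a k)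
    rw [hstdt] at this
    rw [this]
    have h2 : π (m dt a) = (π dt) ∘ₗ (π a) := hπmult dt a
    rw [hdtm a] at h2
    have h3 := congrArg (fun f => (f : V →ₗ[ℂ] V) k) h2.symm
    simp only [map_zero, LinearMap.zero_apply, LinearMap.comp_apply] at h3
    rw [h3]; simp
  have hcreal : starRingEnd ℂ c = c := by
    have : starRingEnd ℂ (B k k) = B k k := (hBherm k k).symm
    rw [hc, map_div₀, this, Complex.conj_ofNat]
  constructor
  · intro a
    have hπak : π a (k - c • u) = π a k := by
      rw [map_sub, map_smul, hu, hπa_dt a]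
      simp
    rw [hπak]
    rw [map_sub, LinearMap.sub_apply, map_smulₛₗ]
    simp only [LinearMap.smul_apply, smul_eq_mul]
    rw [hBuak a, hk a]
    ring
  · simp only [map_sub, map_smulₛₗ, map_smul, LinearMap.sub_apply,
      LinearMap.smul_apply, smul_eq_mul]
    rw [hBuk, hBku, hBuu, hcreal]
    have : B k k = c + c := by rw [hc]; ring
    simp only [RingHom.id_apply]; ring
end

section
/- Let (𝔞, ⋆, d_t, l) be an Itô *-algebra, V a complex vector space, B : V × V → ℂ a Hermitian sesquilinear form (conjugate-linear in the first argument), π a ℂ-linear multiplicative map from 𝔞 into the endomorphisms of V with B(π(a)x, y) = B(x, π(a⋆)y) for all a, x, y, and k ∈ V with B(k, π(a)k) = l(a) for all a ∈ 𝔞. Then B(π(a)k, π(b)k) = l(a⋆·b) for all a, b ∈ 𝔞; consequently, for every a ∈ 𝔞 the vector x_a := π(a)k − l(a)·π(d_t)k satisfies B(x_a, x_a) = l(a⋆·a) ≥ 0, so B is positive semidefinite on the span of the vectors {π(a)k − l(a)·π(d_t)k : a ∈ 𝔞} (the 'middle' space of the triangular representation is Euclidean). -/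
open ComplexOrder in
/-- Given a pseudo-Euclidean ⋆-representation `π` of an Itô *-algebra
with expectation vector `k`, one has `B(π(a)k, π(b)k) = l(a⋆·b)`; hence for
`x_a = π(a)k − l(a)·π(d_t)k` one has `B(x_a, x_a) = l(a⋆·a) ≥ 0`, and `B` is positive
semidefinite on the span of the vectors `x_a` (the middle space is Euclidean). -/
theorem ito_middle_space_is_euclidean
    {A : Type} [AddCommGroup A] [Module ℂ A]
    (m : A →ₗ[ℂ] A →ₗ[ℂ] A) (st : A →ₗ⋆[ℂ] A) (dt : A) (l : A →ₗ[ℂ] ℂ)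
    (hassoc : ∀ a b c : A, m (m a b) c = m a (m b c))
    (hstm : ∀ a b : A, st (m a b) = m (st b) (st a))
    (hstst : ∀ a : A, st (st a) = a)
    (hstdt : st dt = dt)
    (hmdt : ∀ a : A, m a dt = 0)
    (hdtm : ∀ a : A, m dt a = 0)
    (hldt : l dt = 1)
    (hlst : ∀ a : A, l (st a) = starRingEnd ℂ (l a))
    (hlpos : ∀ a : A, 0 ≤ l (m (st a) a))
    {V : Type} [AddCommGroup V] [Module ℂ V]
    (B : V →ₛₗ[starRingEnd ℂ] V →ₗ[ℂ] ℂ)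
    (hBherm : ∀ x y : V, B x y = starRingEnd ℂ (B y x))
    (π : A →ₗ[ℂ] (V →ₗ[ℂ] V))
    (hπmult : ∀ a b : A, π (m a b) = (π a) ∘ₗ (π b))
    (hπadj : ∀ (a : A) (x y : V), B (π a x) y = B x (π (st a) y))
    (k : V) (hk : ∀ a : A, B k (π a k) = l a) :
    (∀ a b : A, B (π a k) (π b k) = l (m (st a) b)) ∧
    (∀ a : A, B (π a k - l a • π dt k) (π a k - l a • π dt k) = l (m (st a) a)) ∧
    (∀ x ∈ Submodule.span ℂ {x : V | ∃ a : A, x = π a k - l a • π dt k},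
      0 ≤ B x x) := by

  have key : ∀ a b : A, B (π a k) (π b k) = l (m (st a) b) := by
    intro a b
    rw [hπadj, ← hk (m (st a) b), hπmult]; rfl
  have key2 : ∀ a : A, B (π a k - l a • π dt k) (π a k - l a • π dt k)
      = l (m (st a) a) := by
    intro a
    simp only [map_sub, LinearMap.sub_apply, map_smulₛₗ, LinearMap.smul_apply,
      key, hstdt, hdtm, hmdt, map_zero, smul_zero, mul_zero, sub_zero,
      smul_eq_mul]
  refine ⟨key, key2, ?_⟩
  set f : A →ₗ[ℂ] V :=
    ((LinearMap.applyₗ k).comp π) - l.smulRight (π dt k) with hf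
  have hfeq : ∀ a : A, f a = π a k - l a • π dt k := fun a => rfl
  have hsub : Submodule.span ℂ {x : V | ∃ a : A, x = π a k - l a • π dt k}
      ≤ LinearMap.range f := by
    rw [Submodule.span_le]
    rintro x ⟨a, rfl⟩
    exact ⟨a, (hfeq a)⟩
  intro x hx
  obtain ⟨a, rfl⟩ := hsub hx
  rw [hfeq, key2 a]
  exact hlpos a
end

section
/- In the space of 3×3 complex matrices, let E_ij denote the matrix units, let G := E₁₃ + E₂₂ + E₃₁, and define the involution X† := G·conj(Xᵀ)·G. Let 𝔥 := span_ℂ{E₁₃, E₁₂, E₂₃, E₂₂} (the four-dimensional Hudson–Parthasarathy Itô algebra, with E₁₃ representing d_t). If S ⊆ 𝔥 is a ℂ-linear subspace of dimension 3 which contains E₁₃ and is closed under matrix multiplication and under the involution †, then S = span_ℂ{E₁₃, E₁₂, E₂₃}; i.e., the only three-dimensional ⋆-subalgebra of the four-dimensional HP algebra containing d_t is the vacuum Brownian algebra generated by the creation and annihilation elements. -/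
/-!
Write `hp a b c d = a E₁₃ + b E₁₂ + c E₂₃ + d E₂₂`. Then
`hp a b c d * hp a' b' c' d' = hp (b c') (b d') (d c') (d d')` and `†` acts by
`hp a b c d ↦ hp ā c̄ b̄ d̄`. Since `S` is three-dimensional, the two linear conditions
`a = d = 0` leave a nonzero `Y = β E₁₂ + γ E₂₃ ∈ S`. If some `X ∈ S` had `d ≠ 0`, then `X Y` and
`Y X` are, modulo `E₁₃`, multiples `d γ E₂₃` and `β d E₁₂`; one of them is nonzero, and `†`
supplies the other, so `span{E₁₃, E₁₂, E₂₃} ⊆ S`. Comparing dimensions gives equality, which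
contradicts `X ∉ span{E₁₃, E₁₂, E₂₃}`. Hence `S ⊆ span{E₁₃, E₁₂, E₂₃}`, and dimensions agree.
-/

open Matrix ComplexConjugate Module

lemma Matrix.exists_mem_ne_zero_apply_eq_zero_of_two_lt_finrank {K m n : Type*} [Field K]
    [Fintype m] [Fintype n] {S : Submodule K (Matrix m n K)} (hS : 2 < finrank K S)
    (i k : m) (j l : n) : ∃ Y ∈ S, Y ≠ 0 ∧ Y i j = 0 ∧ Y k l = 0 := by
  let f : S →ₗ[K] K × K :=
    ((entryLinearMap K K i j).prod (entryLinearMap K K k l)).comp S.subtype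
  obtain ⟨⟨Y, hYS⟩, hYker, hY0⟩ :=
    (Submodule.ne_bot_iff _).1 (LinearMap.ker_ne_bot_of_finrank_lt (f := f) (by simpa using hS))
  exact ⟨Y, hYS, by simpa using hY0, by simpa [f, Prod.ext_iff] using hYker⟩

def hp (a b c d : ℂ) : Matrix (Fin 3) (Fin 3) ℂ :=
  !![0, b, a;
     0, d, c;
     0, 0, 0]

lemma hp_eq (a b c d : ℂ) :
    hp a b c d = a • single 0 2 1 + b • single 0 1 1 + c • single 1 2 1 + d • single 1 1 1 := by
  ext i j
  fin_cases i <;> fin_cases j <;> simp [hp]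

lemma hp_eq_zero_iff {a b c d : ℂ} : hp a b c d = 0 ↔ a = 0 ∧ b = 0 ∧ c = 0 ∧ d = 0 := by
  simp [hp, ← Matrix.ext_iff, Fin.forall_fin_succ]
  tauto

lemma smul_hp (x a b c d : ℂ) : x • hp a b c d = hp (x * a) (x * b) (x * c) (x * d) := by
  simp [hp, smul_of]

lemma hp_mul_hp (a b c d a' b' c' d' : ℂ) :
    hp a b c d * hp a' b' c' d' = hp (b * c') (b * d') (d * c') (d * d') := by
  rw [hp, hp, mul_fin_three, hp]
  simp

noncomputable def minkowskiAdjoint (X : Matrix (Fin 3) (Fin 3) ℂ) : Matrix (Fin 3) (Fin 3) ℂ :=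
  (single 0 2 1 + single 1 1 1 + single 2 0 1) * Xᴴ * (single 0 2 1 + single 1 1 1 + single 2 0 1)

lemma minkowskiAdjoint_hp (a b c d : ℂ) :
    minkowskiAdjoint (hp a b c d) = hp (conj a) (conj c) (conj b) (conj d) := by
  ext i j
  fin_cases i <;> fin_cases j <;> simp [minkowskiAdjoint, hp, mul_apply, single]

noncomputable def hpAlgebra : Submodule ℂ (Matrix (Fin 3) (Fin 3) ℂ) :=
  Submodule.span ℂ {single 0 2 1, single 0 1 1, single 1 2 1, single 1 1 1}

noncomputable def vacuumAlgebra : Submodule ℂ (Matrix (Fin 3) (Fin 3) ℂ) :=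
  Submodule.span ℂ {single 0 2 1, single 0 1 1, single 1 2 1}

lemma mem_hpAlgebra_iff {X : Matrix (Fin 3) (Fin 3) ℂ} :
    X ∈ hpAlgebra ↔ ∃ a b c d, hp a b c d = X := by
  simp only [hpAlgebra, Submodule.mem_span_insert, Submodule.mem_span_singleton, hp_eq]
  constructor
  · rintro ⟨a, _, ⟨b, _, ⟨c, _, ⟨d, rfl⟩, rfl⟩, rfl⟩, rfl⟩
    exact ⟨a, b, c, d, by abel⟩
  · rintro ⟨a, b, c, d, rfl⟩
    exact ⟨a, _, ⟨b, _, ⟨c, _, ⟨d, rfl⟩, rfl⟩, rfl⟩, by abel⟩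

lemma hp_mem_vacuumAlgebra (a b c : ℂ) : hp a b c 0 ∈ vacuumAlgebra := by
  rw [hp_eq, zero_smul, add_zero]
  refine add_mem (add_mem ?_ ?_) ?_ <;>
    exact Submodule.smul_mem _ _ (Submodule.subset_span (by simp))

lemma finrank_vacuumAlgebra : finrank ℂ vacuumAlgebra = 3 := by
  have hli : LinearIndependent ℂ
      ![(single 0 2 1 : Matrix (Fin 3) (Fin 3) ℂ), single 0 1 1, single 1 2 1] := by
    rw [Fintype.linearIndependent_iff]
    intro g hg i
    have := congr_arg (fun X => (X 0 2, X 0 1, X 1 2)) hg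
    simp [Fin.sum_univ_three] at this
    fin_cases i <;> simp [this]
  have := finrank_span_eq_card hli
  rwa [range_cons, range_cons, range_cons_empty, Set.singleton_union, Set.singleton_union] at this

lemma exists_hp_mem_of_le_hpAlgebra {S : Submodule ℂ (Matrix (Fin 3) (Fin 3) ℂ)}
    (hsub : S ≤ hpAlgebra) (hS : 2 < finrank ℂ S) :
    ∃ β γ : ℂ, (β ≠ 0 ∨ γ ≠ 0) ∧ hp 0 β γ 0 ∈ S := by
  obtain ⟨Y, hYS, hY0, hY02, hY11⟩ := exists_mem_ne_zero_apply_eq_zero_of_two_lt_finrank hS 0 1 2 1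
  obtain ⟨a, β, γ, d, rfl⟩ := mem_hpAlgebra_iff.1 (hsub hYS)
  obtain rfl : a = 0 := by simpa [hp] using hY02
  obtain rfl : d = 0 := by simpa [hp] using hY11
  refine ⟨β, γ, ?_, hYS⟩
  by_contra! h
  exact hY0 (hp_eq_zero_iff.2 ⟨rfl, h.1, h.2, rfl⟩)

section StarSubalgebra

variable {S : Submodule ℂ (Matrix (Fin 3) (Fin 3) ℂ)} (hdt : single 0 2 1 ∈ S)
include hdt

lemma hp_mem_iff_of_single_mem (a b c d : ℂ) : hp a b c d ∈ S ↔ hp 0 b c d ∈ S := by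
  have : hp a b c d = hp 0 b c d + a • single 0 2 1 := by
    rw [hp_eq, hp_eq, zero_smul, zero_add]
    abel
  rw [this, S.add_mem_iff_left (S.smul_mem a hdt)]

variable (hmul : ∀ X Y, X ∈ S → Y ∈ S → X * Y ∈ S) (hstar : ∀ X ∈ S, minkowskiAdjoint X ∈ S)
include hmul hstar

lemma vacuumAlgebra_le_of_hp_mem {a b c d β γ : ℂ} (hX : hp a b c d ∈ S) (hd : d ≠ 0)
    (hY : hp 0 β γ 0 ∈ S) (hβγ : β ≠ 0 ∨ γ ≠ 0) : vacuumAlgebra ≤ S := by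
  have hE12_of_E23 (h : hp 0 0 1 0 ∈ S) : hp 0 1 0 0 ∈ S := by
    simpa [minkowskiAdjoint_hp] using hstar _ h
  have hE23_of_E12 (h : hp 0 1 0 0 ∈ S) : hp 0 0 1 0 ∈ S := by
    simpa [minkowskiAdjoint_hp] using hstar _ h
  have hE12_E23 : hp 0 1 0 0 ∈ S ∧ hp 0 0 1 0 ∈ S := by
    rcases hβγ with hβ | hγ
    · have hYX := hmul _ _ hY hX
      rw [hp_mul_hp, hp_mem_iff_of_single_mem hdt,
        show hp 0 (β * d) (0 * c) (0 * d) = (β * d) • hp 0 1 0 0 by simp [smul_hp],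
        S.smul_mem_iff (mul_ne_zero hβ hd)] at hYX
      exact ⟨hYX, hE23_of_E12 hYX⟩
    · have hXY := hmul _ _ hX hY
      rw [hp_mul_hp, hp_mem_iff_of_single_mem hdt,
        show hp 0 (b * 0) (d * γ) (d * 0) = (d * γ) • hp 0 0 1 0 by simp [smul_hp],
        S.smul_mem_iff (mul_ne_zero hd hγ)] at hXY
      exact ⟨hE12_of_E23 hXY, hXY⟩
  refine Submodule.span_le.2 ?_
  simp only [Set.insert_subset_iff, Set.singleton_subset_iff, SetLike.mem_coe]
  exact ⟨hdt, by simpa [hp_eq] using hE12_E23.1, by simpa [hp_eq] using hE12_E23.2⟩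

end StarSubalgebra

/-- In `M₃(ℂ)` with the Minkowski metric `G = E₁₃ + E₂₂ + E₃₁` and the
pseudo-adjoint `X† = G·X.conjTranspose·G`, the only three-dimensional ⋆-subalgebra of the
four-dimensional Hudson–Parthasarathy algebra `𝔥 = span{E₁₃, E₁₂, E₂₃, E₂₂}` containing
`d_t = E₁₃` is the vacuum Brownian algebra `span{E₁₃, E₁₂, E₂₃}`. -/
theorem hp_unique_three_dimensional_star_subalgebra
    (S : Submodule ℂ (Matrix (Fin 3) (Fin 3) ℂ))
    (hsub : S ≤ Submodule.span ℂ
      {Matrix.single 0 2 (1 : ℂ), Matrix.single 0 1 (1 : ℂ),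
        Matrix.single 1 2 (1 : ℂ), Matrix.single 1 1 (1 : ℂ)})
    (hdim : Module.finrank ℂ S = 3)
    (hdt : Matrix.single 0 2 (1 : ℂ) ∈ S)
    (hmul : ∀ X Y : Matrix (Fin 3) (Fin 3) ℂ, X ∈ S → Y ∈ S → X * Y ∈ S)
    (hstar : ∀ X : Matrix (Fin 3) (Fin 3) ℂ, X ∈ S →
      (Matrix.single 0 2 (1 : ℂ) + Matrix.single 1 1 (1 : ℂ)
          + Matrix.single 2 0 (1 : ℂ)) * X.conjTranspose *
        (Matrix.single 0 2 (1 : ℂ) + Matrix.single 1 1 (1 : ℂ)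
          + Matrix.single 2 0 (1 : ℂ)) ∈ S) :
    S = Submodule.span ℂ
      {Matrix.single 0 2 (1 : ℂ), Matrix.single 0 1 (1 : ℂ),
        Matrix.single 1 2 (1 : ℂ)} := by
  show S = vacuumAlgebra
  obtain ⟨β, γ, hβγ, hY⟩ := exists_hp_mem_of_le_hpAlgebra hsub (by omega)
  have hle : S ≤ vacuumAlgebra := by
    intro X hX
    obtain ⟨a, b, c, d, rfl⟩ := mem_hpAlgebra_iff.1 (hsub hX)
    by_cases hd : d = 0
    · exact hd ▸ hp_mem_vacuumAlgebra a b c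
    have hVS := vacuumAlgebra_le_of_hp_mem hdt hmul hstar hX hd hY hβγ
    rw [Submodule.eq_of_le_of_finrank_eq hVS (by rw [finrank_vacuumAlgebra, hdim])]
    exact hX
  exact Submodule.eq_of_le_of_finrank_eq hle (by rw [hdim, finrank_vacuumAlgebra])
end

section
/- Let G be a finite group and λ : G → ℂ a function with λ(g⁻¹) = conj(λ(g)) for all g, which is positive-definite: Σ_{g,h ∈ G} conj(f(g))·f(h)·λ(g⁻¹h) is a nonnegative real for every f : G → ℂ. Let 𝔞 := ℂ × (G → ℂ) with product (α,f)·(β,f') := (Σ_{g,h ∈ G} f(g)·f'(h)·λ(g·h), x ↦ Σ_{g ∈ G} f(g)·f'(g⁻¹·x)), involution (α,f)⋆ := (conj α, g ↦ conj(f(g⁻¹))), d_t := (1, 0), and l(α,f) := α. Then (𝔞, ⋆, d_t, l) is an Itô *-algebra (in particular the product is associative, (a·b)⋆ = b⋆·a⋆, d_t is a ⋆-invariant two-sided annihilator, and l(a⋆·a) = Σ_{g,h} conj(f(g))·f(h)·λ(g⁻¹h) ≥ 0); moreover, if G is non-Abelian then 𝔞 is noncommutative. (This is the Itô group algebra of a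 quantum compensated Poisson motion over G, realizing the table d_g·d_h⋆ = λ(gh⁻¹)·d_t + d_{gh⁻¹} with d_g⋆ = d_{g⁻¹}.) -/
open ComplexOrder

/-- The Itô group algebra `𝔞 = ℂ × (G → ℂ)` of a quantum compensated Poisson motion. -/
abbrev PoissonAlg (G : Type) : Type := ℂ × (G → ℂ)

/-- Product `(α,f)·(β,f') = (Σ_{g,h} f(g)·f'(h)·λ(g·h), x ↦ Σ_g f(g)·f'(g⁻¹·x))`,
realizing the table `d_g·d_h⋆ = λ(gh⁻¹)·d_t + d_{gh⁻¹}`. -/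
noncomputable def pMul {G : Type} [Group G] [Fintype G] (lam : G → ℂ)
    (a b : PoissonAlg G) : PoissonAlg G :=
  (∑ g : G, ∑ h : G, a.2 g * b.2 h * lam (g * h),
    fun x => ∑ g : G, a.2 g * b.2 (g⁻¹ * x))

/-- Involution `(α,f)⋆ = (conj α, g ↦ conj (f g⁻¹))`, realizing `d_g⋆ = d_{g⁻¹}`. -/
def pStar {G : Type} [Group G] (a : PoissonAlg G) : PoissonAlg G :=
  (starRingEnd ℂ a.1, fun g => starRingEnd ℂ (a.2 g⁻¹))

/-- The death element `d_t = (1,0)`. -/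
def pDt (G : Type) : PoissonAlg G := (1, 0)

/-- The state `l(α,f) = α`. -/
def pL {G : Type} (a : PoissonAlg G) : ℂ := a.1


variable {G : Type} [Group G] [Fintype G]

lemma reindexL (k : G) (f1 f2 : G → ℂ) (h : ∀ m, f1 (k * m) = f2 m) :
    ∑ g : G, f1 g = ∑ g : G, f2 g :=
  (Fintype.sum_equiv (Equiv.mulLeft k) f2 f1 (fun m => (h m).symm)).symm

lemma reindexInv (f1 f2 : G → ℂ) (h : ∀ m, f1 m⁻¹ = f2 m) :
    ∑ g : G, f1 g = ∑ g : G, f2 g :=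
  (Fintype.sum_equiv (Equiv.inv G) f2 f1 (fun m => (h m).symm)).symm

lemma passoc (lam : G → ℂ) (a b c : PoissonAlg G) :
    pMul lam (pMul lam a b) c = pMul lam a (pMul lam b c) := by
  refine Prod.ext ?_ (funext fun x => ?_)
  · show ∑ g : G, ∑ h : G, (∑ k : G, a.2 k * b.2 (k⁻¹ * g)) * c.2 h * lam (g * h)
      = ∑ g : G, ∑ h : G, a.2 g * (∑ k : G, b.2 k * c.2 (k⁻¹ * h)) * lam (g * h)
    have L : ∑ g : G, ∑ h : G, (∑ k : G, a.2 k * b.2 (k⁻¹ * g)) * c.2 h * lam (g * h)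
        = ∑ k : G, ∑ g : G, ∑ h : G, a.2 k * b.2 g * c.2 h * lam (k * g * h) := by
      simp only [Finset.sum_mul]
      rw [show (∑ g : G, ∑ h : G, ∑ k : G, a.2 k * b.2 (k⁻¹ * g) * c.2 h * lam (g * h))
          = ∑ g : G, ∑ k : G, ∑ h : G, a.2 k * b.2 (k⁻¹ * g) * c.2 h * lam (g * h)
        from Finset.sum_congr rfl fun g _ => Finset.sum_comm]
      rw [Finset.sum_comm]
      refine Finset.sum_congr rfl fun k _ => ?_
      refine reindexL k _ _ fun m => ?_
      refine Finset.sum_congr rfl fun h _ => ?_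
      simp [mul_assoc]
    have R : ∑ g : G, ∑ h : G, a.2 g * (∑ k : G, b.2 k * c.2 (k⁻¹ * h)) * lam (g * h)
        = ∑ g : G, ∑ k : G, ∑ h : G, a.2 g * b.2 k * c.2 h * lam (g * k * h) := by
      refine Finset.sum_congr rfl fun g _ => ?_
      simp only [Finset.mul_sum, Finset.sum_mul]
      rw [Finset.sum_comm]
      refine Finset.sum_congr rfl fun k _ => ?_
      refine reindexL k _ _ fun m => ?_
      simp [mul_assoc]
    rw [L, R]
  · show ∑ g : G, (∑ k : G, a.2 k * b.2 (k⁻¹ * g)) * c.2 (g⁻¹ * x)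
      = ∑ g : G, a.2 g * ∑ k : G, b.2 k * c.2 (k⁻¹ * (g⁻¹ * x))
    simp only [Finset.sum_mul, Finset.mul_sum]
    rw [Finset.sum_comm]
    refine Finset.sum_congr rfl fun k _ => ?_
    refine reindexL k _ _ fun m => ?_
    simp [mul_assoc]

lemma pstar_mul (lam : G → ℂ) (hconj : ∀ g : G, lam g⁻¹ = starRingEnd ℂ (lam g))
    (a b : PoissonAlg G) :
    pStar (pMul lam a b) = pMul lam (pStar b) (pStar a) := by
  refine Prod.ext ?_ (funext fun x => ?_)
  · show starRingEnd ℂ (∑ g : G, ∑ h : G, a.2 g * b.2 h * lam (g * h))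
      = ∑ g : G, ∑ h : G, starRingEnd ℂ (b.2 g⁻¹) * starRingEnd ℂ (a.2 h⁻¹) * lam (g * h)
    rw [map_sum]
    rw [Finset.sum_comm]
    refine reindexInv _ _ fun g => ?_
    rw [map_sum]
    refine reindexInv _ _ fun h => ?_
    simp only [map_mul]
    rw [← mul_inv_rev, hconj, Complex.conj_conj]
    ring
  · show starRingEnd ℂ (∑ g : G, a.2 g * b.2 (g⁻¹ * x⁻¹))
      = ∑ g : G, starRingEnd ℂ (b.2 g⁻¹) * starRingEnd ℂ (a.2 (g⁻¹ * x)⁻¹)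
    rw [map_sum]
    symm
    refine reindexL x _ _ fun m => ?_
    simp only [mul_inv_rev, inv_inv, map_mul, inv_mul_cancel_left]
    ring

lemma ppos_eq (lam : G → ℂ) (a : PoissonAlg G) :
    pL (pMul lam (pStar a) a)
      = ∑ g : G, ∑ h : G, starRingEnd ℂ (a.2 g) * a.2 h * lam (g⁻¹ * h) := by
  show ∑ g : G, ∑ h : G, starRingEnd ℂ (a.2 g⁻¹) * a.2 h * lam (g * h)
    = ∑ g : G, ∑ h : G, starRingEnd ℂ (a.2 g) * a.2 h * lam (g⁻¹ * h)
  refine reindexInv _ _ fun g => ?_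
  simp [inv_inv]

lemma pnoncomm (lam : G → ℂ) (u v : G) (huv : u * v ≠ v * u) :
    ∃ a b : PoissonAlg G, pMul lam a b ≠ pMul lam b a := by
  classical
  refine ⟨(0, fun x => if x = u then 1 else 0), (0, fun x => if x = v then 1 else 0),
    fun h => ?_⟩
  have h2 := congrArg (fun p : PoissonAlg G => p.2 (u * v)) h
  simp only [pMul] at h2
  rw [Finset.sum_eq_single u (fun b _ hb => by simp [if_neg hb]) (by simp),
      Finset.sum_eq_single v (fun b _ hb => by simp [if_neg hb]) (by simp)] at h2
  have hv : v⁻¹ * (u * v) ≠ u := by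
    intro hx
    have h3 := congrArg (fun w => v * w) hx
    simp only [mul_inv_cancel_left] at h3
    exact huv h3
  simp [inv_mul_cancel_left, hv] at h2

/-- For a finite group `G` and a positive-definite function
`λ : G → ℂ` with `λ(g⁻¹) = conj λ(g)`, the data above form an Itô *-algebra (the Itô
group algebra of a quantum compensated Poisson motion over `G`), with
`l(a⋆·a) = Σ_{g,h} conj(f g)·f(h)·λ(g⁻¹h) ≥ 0`; if `G` is non-Abelian then this Itô
algebra is noncommutative. -/
theorem quantum_poisson_group_ito_algebra (G : Type) [Group G] [Fintype G]
    (lam : G → ℂ)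
    (hconj : ∀ g : G, lam g⁻¹ = starRingEnd ℂ (lam g))
    (hpos : ∀ f : G → ℂ,
      0 ≤ ∑ g : G, ∑ h : G, starRingEnd ℂ (f g) * f h * lam (g⁻¹ * h)) :
    (∀ a b c : PoissonAlg G,
      pMul lam (pMul lam a b) c = pMul lam a (pMul lam b c)) ∧
    (∀ a b c : PoissonAlg G, pMul lam (a + b) c = pMul lam a c + pMul lam b c) ∧
    (∀ a b c : PoissonAlg G, pMul lam a (b + c) = pMul lam a b + pMul lam a c) ∧
    (∀ (z : ℂ) (a b : PoissonAlg G), pMul lam (z • a) b = z • pMul lam a b) ∧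
    (∀ (z : ℂ) (a b : PoissonAlg G), pMul lam a (z • b) = z • pMul lam a b) ∧
    (∀ a b : PoissonAlg G, pStar (pMul lam a b) = pMul lam (pStar b) (pStar a)) ∧
    (∀ a : PoissonAlg G, pStar (pStar a) = a) ∧
    (∀ a b : PoissonAlg G, pStar (a + b) = pStar a + pStar b) ∧
    (∀ (z : ℂ) (a : PoissonAlg G), pStar (z • a) = starRingEnd ℂ z • pStar a) ∧
    pStar (pDt G) = pDt G ∧
    (∀ a : PoissonAlg G, pMul lam a (pDt G) = 0) ∧
    (∀ a : PoissonAlg G, pMul lam (pDt G) a = 0) ∧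
    (∀ a b : PoissonAlg G, pL (a + b) = pL a + pL b) ∧
    (∀ (z : ℂ) (a : PoissonAlg G), pL (z • a) = z * pL a) ∧
    pL (pDt G) = 1 ∧
    (∀ a : PoissonAlg G, pL (pStar a) = starRingEnd ℂ (pL a)) ∧
    (∀ a : PoissonAlg G,
      pL (pMul lam (pStar a) a)
        = ∑ g : G, ∑ h : G, starRingEnd ℂ (a.2 g) * a.2 h * lam (g⁻¹ * h) ∧
      0 ≤ pL (pMul lam (pStar a) a)) ∧
    ((∃ u v : G, u * v ≠ v * u) →
      ∃ a b : PoissonAlg G, pMul lam a b ≠ pMul lam b a) := by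
  refine ⟨passoc lam, ?_, ?_, ?_, ?_, pstar_mul lam hconj, ?_, ?_, ?_, ?_, ?_, ?_,
    ?_, ?_, rfl, fun a => rfl, fun a => ⟨ppos_eq lam a, ?_⟩,
    fun ⟨u, v, huv⟩ => pnoncomm lam u v huv⟩
  · intro a b c
    refine Prod.ext ?_ (funext fun x => ?_) <;>
      simp [pMul, add_mul, Finset.sum_add_distrib]
  · intro a b c
    refine Prod.ext ?_ (funext fun x => ?_) <;>
      simp [pMul, mul_add, add_mul, Finset.sum_add_distrib]
  · intro z a b
    refine Prod.ext ?_ (funext fun x => ?_) <;>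
      simp [pMul, Finset.mul_sum, mul_assoc]
  · intro z a b
    refine Prod.ext ?_ (funext fun x => ?_) <;>
      simp [pMul, Finset.mul_sum, mul_assoc, mul_left_comm]
  · intro a
    refine Prod.ext ?_ (funext fun x => ?_) <;> simp [pStar]
  · intro a b
    refine Prod.ext ?_ (funext fun x => ?_) <;> simp [pStar]
  · intro z a
    refine Prod.ext ?_ (funext fun x => ?_) <;> simp [pStar]
  · refine Prod.ext ?_ (funext fun x => ?_) <;> simp [pStar, pDt]
  · intro a
    refine Prod.ext ?_ (funext fun x => ?_) <;> simp [pMul, pDt]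
  · intro a
    refine Prod.ext ?_ (funext fun x => ?_) <;> simp [pMul, pDt]
  · intro a b
    simp [pL]
  · intro z a
    simp [pL]
  · rw [ppos_eq]
    exact hpos a.2
end
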